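/- arXiv:2108.03069 — 8 statements merged into one kernel-verified Lean document; each statement's English description precedes it below -/
import Mathlib

section
/- Suppose S_n is a good orientable sequence of order n with odd weight and period m_n, and the sequences S_i and periods m_i (i ≥ n) are defined recursively by S_{i+1} = E(D^{-1}(S_i)). Then for every j ≥ 0: if m_n is odd, m_{n+2j} = 2^{2j}·m_n + (2^{2j} − 1)/3 and m_{n+2j+1} = 2^{2j+1}·m_n + (2^{2j+1} − 2)/3; while if m_n is even, m_{n+2j} = 2^{2j}·m_n + (2^{2j+1} − 2)/3 and m_{n+2j+1} = 2^{2j+1}·m_n + (2^{2j+2} − 1)/3. -/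
/-- A sequence has `m` as a (not necessarily least) period. -/
def hasPer (s : ℕ → Bool) (m : ℕ) : Prop := ∀ i, s (i + m) = s i

/-- `m` is the (least positive) period of `s`. -/
def isPeriod (s : ℕ → Bool) (m : ℕ) : Prop :=
  0 < m ∧ hasPer s m ∧ ∀ k, 0 < k → hasPer s k → m ≤ k

/-- The `n`-tuple appearing at position `i` of `s`. -/
def tup (s : ℕ → Bool) (n i : ℕ) : Fin n → Bool := fun k => s (i + (k : ℕ))

/-- The reverse of an `n`-tuple. -/
def tupRev {n : ℕ} (u : Fin n → Bool) : Fin n → Bool := fun k => u k.rev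

/-- An `n`-window sequence of period `m`. -/
def isNWindow (s : ℕ → Bool) (n m : ℕ) : Prop :=
  isPeriod s m ∧ ∀ i j, tup s n i = tup s n j → i ≡ j [MOD m]

/-- The weight of (one period of) `s`. -/
def wt (s : ℕ → Bool) (m : ℕ) : ℕ := ∑ i ∈ Finset.range m, (if s i then 1 else 0)

/-- The complement of a sequence. -/
def seqCompl (s : ℕ → Bool) : ℕ → Bool := fun i => !(s i)

/-- Two sequences are disjoint if they share no `n`-tuple. -/
def disjointSeq (s t : ℕ → Bool) (n : ℕ) : Prop := ∀ i j, tup s n i ≠ tup t n j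

/-- A sequence is primitive if it is disjoint from its complement. -/
def primitiveSeq (s : ℕ → Bool) (n : ℕ) : Prop := disjointSeq s (seqCompl s) n

/-- An orientable sequence of order `n` and period `m`. -/
def isOrientable (s : ℕ → Bool) (n m : ℕ) : Prop :=
  isNWindow s n m ∧ ∀ i j, tup s n i ≠ tupRev (tup s n j)

/-- Two sequences are o-disjoint: disjoint, and no `n`-tuple of one is the
reverse of an `n`-tuple of the other. -/
def oDisjoint (s t : ℕ → Bool) (n : ℕ) : Prop :=
  disjointSeq s t n ∧ ∀ i j, tup s n i ≠ tupRev (tup t n j)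

/-- The Lempel homomorphism `D` on periodic sequences. -/
def Dmap (t : ℕ → Bool) : ℕ → Bool := fun i => xor (t i) (t (i + 1))

/-- The set `D⁻¹(s)` of sequences mapping to `s` under `D`. -/
def Dinv (s : ℕ → Bool) : Set (ℕ → Bool) := { t | Dmap t = s }

/-- `1^len` occurs at position `i` of `s`. -/
def occOnes (s : ℕ → Bool) (len i : ℕ) : Prop := ∀ k, k < len → s (i + k) = true

/-- `0^len` occurs at position `i` of `s`. -/
def occZeros (s : ℕ → Bool) (len i : ℕ) : Prop := ∀ k, k < len → s (i + k) = false

/-- The periodic sequence of period dividing `m + 1` obtained from the generating cycle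
`[s_0, ..., s_{r-1}, 1, s_r, ..., s_{m-1}]`, i.e. by inserting an extra `1` at
position `r` of the generating cycle `[s_0, ..., s_{m-1}]`. -/
def insertAt (s : ℕ → Bool) (m r : ℕ) : ℕ → Bool := fun i =>
  if i % (m + 1) < r then s (i % (m + 1))
  else if i % (m + 1) = r then true
  else s (i % (m + 1) - 1)

/-- A good orientable sequence: an `OS(n)` of period `m` in which the tuple
`0^(n-4)` occurs exactly once in a period. -/
def goodOS (s : ℕ → Bool) (n m : ℕ) : Prop :=
  isOrientable s n m ∧ ∃! i, i < m ∧ occZeros s (n - 4) i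

/-- One step of the recursion `S' = E(D⁻¹(S))`: some `t ∈ D⁻¹(S)` (where `S` has
period `m` and hence `t` has period `2m`) contains exactly one occurrence of the
tuple `1^(k-4)` in a period, at position `r`, and `S'` is `t` if `t` has odd
weight and otherwise is obtained from `t` by inserting an extra `1` there. -/
def EDinvStep (s : ℕ → Bool) (m k : ℕ) (s' : ℕ → Bool) : Prop :=
  ∃ t ∈ Dinv s, ∃ r, r < 2 * m ∧ occOnes t (k - 4) r ∧
    (∀ i, i < 2 * m → occOnes t (k - 4) i → i = r) ∧
    s' = if Odd (wt t (2 * m)) then t else insertAt t (2 * m) r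


section Helpers

open Finset

private lemma wt_window {s : ℕ → Bool} {m : ℕ} (hp : hasPer s m) :
    ∀ i, (∑ k ∈ Finset.range m, if s (i + k) then (1:ℕ) else 0) = wt s m := by
  intro i
  induction i with
  | zero => simp [wt]
  | succ i ih =>
    rw [← ih]
    have h1 : (∑ k ∈ Finset.range (m+1), if s (i + k) then (1:ℕ) else 0)
        = (∑ k ∈ Finset.range m, if s (i + k) then (1:ℕ) else 0)
          + (if s (i + m) then 1 else 0) := Finset.sum_range_succ _ m
    have h2 : (∑ k ∈ Finset.range (m+1), if s (i + k) then (1:ℕ) else 0)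
        = (∑ k ∈ Finset.range m, if s (i + (k+1)) then (1:ℕ) else 0)
          + (if s (i + 0) then 1 else 0) := Finset.sum_range_succ' _ m
    have h3 : (∑ k ∈ Finset.range m, if s (i + (k+1)) then (1:ℕ) else 0)
        = ∑ k ∈ Finset.range m, if s (i + 1 + k) then (1:ℕ) else 0 := by
      apply Finset.sum_congr rfl
      intro k _
      have : i + (k + 1) = i + 1 + k := by omega
      rw [this]
    have h4 : s (i + m) = s i := hp i
    rw [h3] at h2
    rw [h4] at h1
    simp only [Nat.add_zero] at h2
    omega

private lemma hasPer_mul {s : ℕ → Bool} {m : ℕ} (hp : hasPer s m) (q : ℕ) :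
    hasPer s (m * q) := by
  induction q with
  | zero => intro i; simp
  | succ q ih =>
    intro i
    have : i + m * (q + 1) = i + m * q + m := by ring
    rw [this, hp, ih]

private lemma isPeriod_dvd {s : ℕ → Bool} {m k : ℕ} (hm : isPeriod s m)
    (hk : hasPer s k) : m ∣ k := by
  obtain ⟨hm0, hmp, hmin⟩ := hm
  have hr : hasPer s (k % m) := by
    intro i
    have h1 : s (i + k % m + m * (k / m)) = s (i + k % m) := hasPer_mul hmp _ _
    have h2 : i + k % m + m * (k / m) = i + k := by
      have := Nat.mod_add_div k m; omega
    rw [h2] at h1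
    rw [← h1, hk]
  rcases Nat.eq_zero_or_pos (k % m) with h | h
  · exact Nat.dvd_of_mod_eq_zero h
  · have := hmin _ h hr
    have := Nat.mod_lt k hm0
    omega

private lemma wt_mul {s : ℕ → Bool} {p : ℕ} (hp : hasPer s p) (q : ℕ) :
    wt s (p * q) = q * wt s p := by
  induction q with
  | zero => simp [wt]
  | succ q ih =>
    have h1 : p * (q + 1) = p * q + p := by ring
    rw [h1]
    show (∑ i ∈ Finset.range (p * q + p), if s i then (1:ℕ) else 0) = _
    rw [Finset.sum_range_add]
    have h2 : (∑ i ∈ Finset.range p, if s (p * q + i) then (1:ℕ) else 0) = wt s p :=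
      wt_window hp _
    rw [h2]
    have : (∑ i ∈ Finset.range (p * q), if s i then (1:ℕ) else 0) = wt s (p * q) := rfl
    rw [this, ih]; ring

private lemma dinv_shift {t s : ℕ → Bool} (ht : Dmap t = s) (i : ℕ) :
    ∀ j, t (i + j) =
      xor (t i) (decide (Odd (∑ k ∈ Finset.range j, if s (i + k) then (1:ℕ) else 0))) := by
  intro j
  induction j with
  | zero => simp [Nat.odd_iff]
  | succ j ih =>
    have hs : s (i + j) = xor (t (i + j)) (t (i + j + 1)) := by
      rw [← ht]; rfl
    have hstep : t (i + j + 1) = xor (t (i + j)) (s (i + j)) := by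
      rw [hs]; cases t (i + j) <;> cases t (i + j + 1) <;> rfl
    have hij : i + (j + 1) = i + j + 1 := by omega
    rw [hij, hstep, ih, Finset.sum_range_succ, Bool.xor_assoc]
    congr 1
    cases hsj : s (i + j)
    · simp
    · simp only [if_true, Bool.xor_true]
      rcases Nat.even_or_odd (∑ k ∈ Finset.range j, if s (i + k) then (1:ℕ) else 0) with he | he <;>
        simp [Nat.even_iff, Nat.odd_iff] at he ⊢ <;>
        simp [Nat.add_mod, he]

private lemma t_antiperiod {t s : ℕ → Bool} {m : ℕ} (ht : Dmap t = s)
    (hp : hasPer s m) (hw : Odd (wt s m)) (i : ℕ) : t (i + m) = !(t i) := by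
  have := dinv_shift ht i m
  rw [wt_window hp i] at this
  rw [this]
  simp [hw]

private lemma t_hasPer {t s : ℕ → Bool} {m : ℕ} (ht : Dmap t = s)
    (hp : hasPer s m) (hw : Odd (wt s m)) : hasPer t (2 * m) := by
  intro i
  have h1 : i + 2 * m = (i + m) + m := by omega
  rw [h1, t_antiperiod ht hp hw, t_antiperiod ht hp hw]
  simp

private lemma t_wt {t s : ℕ → Bool} {m : ℕ} (ht : Dmap t = s)
    (hp : hasPer s m) (hw : Odd (wt s m)) : wt t (2 * m) = m := by
  show (∑ i ∈ Finset.range (2 * m), if t i then (1:ℕ) else 0) = m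
  have h1 : 2 * m = m + m := by omega
  rw [h1, Finset.sum_range_add]
  have h2 : ∀ i ∈ Finset.range m,
      ((if t i then (1:ℕ) else 0) + (if t (m + i) then (1:ℕ) else 0)) = 1 := by
    intro i _
    have : t (m + i) = !(t i) := by
      rw [Nat.add_comm m i]; exact t_antiperiod ht hp hw i
    rw [this]; cases t i <;> simp
  rw [← Finset.sum_add_distrib]
  rw [Finset.sum_congr rfl h2]
  simp

private lemma dmap_per {t s : ℕ → Bool} (ht : Dmap t = s) {k : ℕ}
    (hk : hasPer t k) : hasPer s k := by
  intro i
  rw [← ht]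
  show xor (t (i + k)) (t (i + k + 1)) = xor (t i) (t (i + 1))
  have : i + k + 1 = (i + 1) + k := by omega
  rw [this, hk, hk]

private lemma t_isPeriod {t s : ℕ → Bool} {m : ℕ} (ht : Dmap t = s)
    (hm : isPeriod s m) (hw : Odd (wt s m)) : isPeriod t (2 * m) := by
  have hm0 := hm.1
  have hmp := hm.2.1
  refine ⟨by omega, t_hasPer ht hmp hw, ?_⟩
  intro k hk0 hk
  have hdvd : m ∣ k := isPeriod_dvd hm (dmap_per ht hk)
  obtain ⟨c, rfl⟩ := hdvd
  rcases Nat.lt_or_ge c 2 with hc | hc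
  · interval_cases c
    · omega
    · exfalso
      have h1 : t (0 + m * 1) = t 0 := hk 0
      have h2 : t (0 + m) = !(t 0) := t_antiperiod ht hmp hw 0
      simp only [Nat.zero_add, Nat.mul_one] at h1 h2
      rw [h1] at h2
      simp at h2
  · calc 2 * m ≤ m * c := by nlinarith
    _ = m * c := rfl

private lemma isPeriod_unique {s : ℕ → Bool} {m m' : ℕ}
    (h : isPeriod s m) (h' : isPeriod s m') : m = m' := by
  have h1 := h.2.2 m' h'.1 h'.2.1
  have h2 := h'.2.2 m h.1 h.2.1
  omega

private lemma insertAt_hasPer (t : ℕ → Bool) (m r : ℕ) :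
    hasPer (insertAt t m r) (m + 1) := by
  intro i
  unfold insertAt
  rw [Nat.add_mod_right]

private lemma insertAt_wt (t : ℕ → Bool) {m r : ℕ} (hr : r < m) :
    wt (insertAt t m r) (m + 1) = wt t m + 1 := by
  have hval : ∀ i < m + 1, insertAt t m r i =
      (if i < r then t i else if i = r then true else t (i - 1)) := by
    intro i hi
    unfold insertAt
    rw [Nat.mod_eq_of_lt hi]
  show (∑ i ∈ Finset.range (m + 1), if insertAt t m r i then (1:ℕ) else 0) = _
  have hsplit : m + 1 = r + 1 + (m - r) := by omega
  rw [hsplit, Finset.sum_range_add, Finset.sum_range_add]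
  have e1 : (∑ i ∈ Finset.range r, if insertAt t m r i then (1:ℕ) else 0)
      = ∑ i ∈ Finset.range r, if t i then (1:ℕ) else 0 := by
    apply Finset.sum_congr rfl
    intro i hi
    rw [Finset.mem_range] at hi
    rw [hval i (by omega)]
    simp [hi]
  have e2 : (∑ i ∈ Finset.range 1, if insertAt t m r (r + i) then (1:ℕ) else 0) = 1 := by
    rw [Finset.sum_range_one]
    have hrr : insertAt t m r (r + 0) = true := by
      rw [Nat.add_zero, hval r (by omega)]; simp
    simp only [Nat.add_zero] at hrr
    simp [hrr]
  have e3 : (∑ i ∈ Finset.range (m - r), if insertAt t m r (r + 1 + i) then (1:ℕ) else 0)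
      = ∑ i ∈ Finset.range (m - r), if t (r + i) then (1:ℕ) else 0 := by
    apply Finset.sum_congr rfl
    intro i hi
    rw [Finset.mem_range] at hi
    rw [hval (r + 1 + i) (by omega)]
    have h1 : ¬ (r + 1 + i < r) := by omega
    have h2 : ¬ (r + 1 + i = r) := by omega
    have h3 : r + 1 + i - 1 = r + i := by omega
    simp [h1, h2, h3]
  rw [e1, e2, e3]
  have : wt t m = (∑ i ∈ Finset.range r, if t i then (1:ℕ) else 0)
      + ∑ i ∈ Finset.range (m - r), if t (r + i) then (1:ℕ) else 0 := by
    show (∑ i ∈ Finset.range m, if t i then (1:ℕ) else 0) = _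
    have hd : m = r + (m - r) := by omega
    nth_rewrite 1 [hd]
    rw [Finset.sum_range_add]
  omega

/-- The key step lemma: one application of `EDinvStep` sends period `m` to
`2m` (if `m` odd) or `2m+1` (if `m` even), and preserves odd weight. -/
private lemma step_lemma {s s' : ℕ → Bool} {m m' k : ℕ}
    (hm : isPeriod s m) (hw : Odd (wt s m))
    (hstep : EDinvStep s m k s') (hm' : isPeriod s' m') :
    m' = 2 * m + (if Even m then 1 else 0) ∧ Odd (wt s' m') := by
  obtain ⟨t, ht, r, hr, _, _, hs'⟩ := hstep
  have ht' : Dmap t = s := ht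
  have hwt : wt t (2 * m) = m := t_wt ht' hm.2.1 hw
  rw [hwt] at hs'
  by_cases hmo : Odd m
  · have hE : ¬ Even m := by simp [Nat.even_iff, Nat.odd_iff] at hmo ⊢; omega
    simp only [hmo, if_true] at hs'
    subst hs'
    have hper : isPeriod s' (2 * m) := t_isPeriod ht' hm hw
    have heq : m' = 2 * m := isPeriod_unique hm' hper
    refine ⟨by rw [heq]; simp [hE], ?_⟩
    rw [heq, hwt]
    exact hmo
  · have hE : Even m := Nat.not_odd_iff_even.mp hmo
    simp only [hmo, if_false] at hs'
    subst hs'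
    set u := insertAt t (2 * m) r with hu
    have hup : hasPer u (2 * m + 1) := insertAt_hasPer t (2 * m) r
    have huw : wt u (2 * m + 1) = m + 1 := by
      rw [hu, insertAt_wt t hr, hwt]
    -- m' divides 2m+1
    have hdvd : m' ∣ 2 * m + 1 := isPeriod_dvd hm' hup
    obtain ⟨q, hq⟩ := hdvd
    have hqw : wt u (m' * q) = q * wt u m' := wt_mul hm'.2.1 q
    rw [← hq, huw] at hqw
    have hq1 : q ∣ m + 1 := ⟨wt u m', hqw⟩
    have hq2 : q ∣ 2 * m + 1 := ⟨m', by rw [hq]; ring⟩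
    have hq3 : q ∣ 1 := by
      have := Nat.dvd_sub (Dvd.dvd.mul_left hq1 2) hq2
      have h4 : 2 * (m + 1) - (2 * m + 1) = 1 := by omega
      rwa [h4] at this
    have hq4 : q = 1 := Nat.dvd_one.mp hq3
    rw [hq4, Nat.mul_one] at hq
    have heq : m' = 2 * m + 1 := by omega
    refine ⟨by rw [heq]; simp [hE], ?_⟩
    rw [heq, huw]
    rcases hE with ⟨c, hc⟩
    exact ⟨c, by omega⟩

private def aSeq : ℕ → ℕ
  | 0 => 0
  | (j+1) => 4 * aSeq j + 1

private lemma aSeq_zero : aSeq 0 = 0 := rfl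
private lemma aSeq_succ (j : ℕ) : aSeq (j+1) = 4 * aSeq j + 1 := rfl

private lemma aSeq_eq : ∀ j, 3 * aSeq j + 1 = 4 ^ j := by
  intro j
  induction j with
  | zero => simp [aSeq_zero]
  | succ j ih =>
    rw [aSeq_succ, pow_succ]
    calc 3 * (4 * aSeq j + 1) + 1 = 4 * (3 * aSeq j + 1) := by ring
    _ = 4 ^ j * 4 := by rw [ih]; ring


end Helpers

/-- Corollary 3: with the sequences and periods defined as in Corollary 2, for
every `j ≥ 0`: if `m_n` is odd then `m_{n+2j} = 2^(2j) m_n + (2^(2j) - 1)/3` and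
`m_{n+2j+1} = 2^(2j+1) m_n + (2^(2j+1) - 2)/3`, while if `m_n` is even then
`m_{n+2j} = 2^(2j) m_n + (2^(2j+1) - 2)/3` and
`m_{n+2j+1} = 2^(2j+1) m_n + (2^(2j+2) - 1)/3` (all divisions being exact). -/
theorem recursive_family_periods (n : ℕ) (Seq : ℕ → ℕ → Bool) (per : ℕ → ℕ)
    (hstart : goodOS (Seq n) n (per n)) (hoddw : Odd (wt (Seq n) (per n)))
    (hrec : ∀ i, n ≤ i → EDinvStep (Seq i) (per i) (i + 1) (Seq (i + 1)))
    (hper : ∀ i, n ≤ i → isPeriod (Seq i) (per i)) :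
    ∀ j : ℕ,
      (Odd (per n) →
        per (n + 2 * j) = 2 ^ (2 * j) * per n + (2 ^ (2 * j) - 1) / 3 ∧
        per (n + 2 * j + 1) = 2 ^ (2 * j + 1) * per n + (2 ^ (2 * j + 1) - 2) / 3) ∧
      (Even (per n) →
        per (n + 2 * j) = 2 ^ (2 * j) * per n + (2 ^ (2 * j + 1) - 2) / 3 ∧
        per (n + 2 * j + 1) = 2 ^ (2 * j + 1) * per n + (2 ^ (2 * j + 2) - 1) / 3) := by
  have stepAll : ∀ j : ℕ, Odd (wt (Seq (n + j)) (per (n + j))) ∧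
      per (n + j + 1) = 2 * per (n + j) + (if Even (per (n + j)) then 1 else 0) := by
    intro j
    induction j with
    | zero =>
      have h0 : Odd (wt (Seq (n + 0)) (per (n + 0))) := by simpa using hoddw
      have h := step_lemma (hper (n + 0) (by omega)) h0 (hrec (n + 0) (by omega))
        (hper (n + 0 + 1) (by omega))
      exact ⟨h0, h.1⟩
    | succ j ih =>
      have h := step_lemma (hper (n + j) (by omega)) ih.1 (hrec (n + j) (by omega))
        (hper (n + j + 1) (by omega))
      have e : n + (j + 1) = n + j + 1 := by omega
      have hw1 : Odd (wt (Seq (n + (j + 1))) (per (n + (j + 1)))) := by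
        rw [e]; exact h.2
      have h2 := step_lemma (hper (n + j + 1) (by omega)) (by rwa [e] at hw1)
        (hrec (n + j + 1) (by omega)) (hper (n + j + 1 + 1) (by omega))
      refine ⟨hw1, ?_⟩
      rw [e]; exact h2.1
  have rec' : ∀ j : ℕ,
      per (n + j + 1) = 2 * per (n + j) + (if Even (per (n + j)) then 1 else 0) :=
    fun j => (stepAll j).2
  intro j
  have hX := aSeq_eq j
  have p1 : (2:ℕ) ^ (2 * j) = 4 ^ j := by rw [pow_mul]; norm_num
  have p2 : (2:ℕ) ^ (2 * j + 1) = 2 * 4 ^ j := by rw [pow_succ, p1]; ring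
  have p3 : (2:ℕ) ^ (2 * j + 2) = 4 * 4 ^ j := by
    rw [show 2 * j + 2 = (2 * j + 1) + 1 from rfl, pow_succ, p2]; ring
  have d1 : ((2:ℕ) ^ (2 * j) - 1) / 3 = aSeq j := by
    rw [p1, show (4:ℕ) ^ j - 1 = 3 * aSeq j from by omega,
      Nat.mul_div_cancel_left _ (by norm_num)]
  have d2 : ((2:ℕ) ^ (2 * j + 1) - 2) / 3 = 2 * aSeq j := by
    rw [p2, show 2 * (4:ℕ) ^ j - 2 = 3 * (2 * aSeq j) from by omega,
      Nat.mul_div_cancel_left _ (by norm_num)]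
  have d3 : ((2:ℕ) ^ (2 * j + 2) - 1) / 3 = 4 * aSeq j + 1 := by
    rw [p3, show 4 * (4:ℕ) ^ j - 1 = 3 * (4 * aSeq j + 1) from by omega,
      Nat.mul_div_cancel_left _ (by norm_num)]
  constructor
  · intro hModd
    have main : ∀ i, per (n + 2 * i) = 4 ^ i * per n + aSeq i ∧
        per (n + 2 * i + 1) = 2 * (4 ^ i * per n) + 2 * aSeq i := by
      intro i
      induction i with
      | zero =>
        have h := rec' 0
        simp only [Nat.add_zero] at h
        rw [if_neg (Nat.not_even_iff_odd.mpr hModd)] at h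
        constructor
        · simp [aSeq_zero]
        · simp only [Nat.mul_zero, Nat.add_zero, pow_zero, one_mul, aSeq_zero]
          omega
      | succ i ih =>
        obtain ⟨ih1, ih2⟩ := ih
        have hev : Even (per (n + 2 * i + 1)) := by
          rw [ih2]; exact ⟨4 ^ i * per n + aSeq i, by ring⟩
        have h1 := rec' (2 * i + 1)
        have e1 : n + (2 * i + 1) = n + 2 * i + 1 := by omega
        rw [e1, if_pos hev, ih2] at h1
        have e2 : n + 2 * i + 1 + 1 = n + 2 * (i + 1) := by omega
        rw [e2] at h1
        have g1 : per (n + 2 * (i + 1)) = 4 ^ (i + 1) * per n + aSeq (i + 1) := by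
          rw [h1, aSeq_succ, pow_succ]; ring
        refine ⟨g1, ?_⟩
        have hodd : ¬ Even (per (n + 2 * (i + 1))) := by
          rw [g1, aSeq_succ,
            show (4:ℕ) ^ (i + 1) * per n = 2 * (2 * (4 ^ i * per n)) from by
              rw [pow_succ]; ring]
          simp only [Nat.even_iff]
          omega
        have h2 := rec' (2 * (i + 1))
        rw [if_neg hodd, g1] at h2
        rw [h2]
        ring
    obtain ⟨g1, g2⟩ := main j
    constructor
    · rw [d1, p1]; exact g1
    · rw [d2, p2, g2]; ring
  · intro hMev
    have main : ∀ i, per (n + 2 * i) = 4 ^ i * per n + 2 * aSeq i ∧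
        per (n + 2 * i + 1) = 2 * (4 ^ i * per n) + (4 * aSeq i + 1) := by
      intro i
      induction i with
      | zero =>
        have h := rec' 0
        simp only [Nat.add_zero] at h
        rw [if_pos hMev] at h
        constructor
        · simp [aSeq_zero]
        · simp only [Nat.mul_zero, Nat.add_zero, pow_zero, one_mul, aSeq_zero]
          omega
      | succ i ih =>
        obtain ⟨ih1, ih2⟩ := ih
        have hodd : ¬ Even (per (n + 2 * i + 1)) := by
          rw [ih2]
          simp only [Nat.even_iff]
          omega
        have h1 := rec' (2 * i + 1)
        have e1 : n + (2 * i + 1) = n + 2 * i + 1 := by omega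
        rw [e1, if_neg hodd, ih2] at h1
        have e2 : n + 2 * i + 1 + 1 = n + 2 * (i + 1) := by omega
        rw [e2] at h1
        have g1 : per (n + 2 * (i + 1)) = 4 ^ (i + 1) * per n + 2 * aSeq (i + 1) := by
          rw [h1, aSeq_succ, pow_succ]; ring
        refine ⟨g1, ?_⟩
        have hev : Even (per (n + 2 * (i + 1))) := by
          rw [g1]
          obtain ⟨c, hc⟩ := hMev
          exact ⟨4 ^ (i + 1) * c + aSeq (i + 1), by rw [hc]; ring⟩
        have h2 := rec' (2 * (i + 1))
        rw [if_pos hev, g1] at h2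
        rw [h2]
        ring
    obtain ⟨g1, g2⟩ := main j
    constructor
    · rw [d2, p1]; exact g1
    · rw [d3, p2, g2]; ring
end

section
/- If S=(s_i) is an orientable sequence of order n and period m, then the finite binary sequence (s_0, s_1, ..., s_{n+m-2}) is an aperiodic orientable sequence of order n of length m+n-1. -/
/-- The `n`-tuple of the finite sequence `L` at position `i` (as a list). -/
def ltup (L : List Bool) (n i : ℕ) : List Bool := (L.drop i).take n

/-- An aperiodic orientable sequence of order `n`: the `n`-tuples at positions
`0 ≤ i ≤ length - n`, together with their reverses, are pairwise distinct. -/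
def isAOS (L : List Bool) (n : ℕ) : Prop :=
  n ≤ L.length ∧ ∀ i j, i ≤ L.length - n → j ≤ L.length - n →
    (ltup L n i = ltup L n j → i = j) ∧ ltup L n i ≠ (ltup L n j).reverse

/-- The complement of a finite sequence. -/
def complL (L : List Bool) : List Bool := L.map (fun b => !b)

/-- The Lempel homomorphism `D` on finite sequences. -/
def DmapL (L : List Bool) : List Bool := L.zipWith xor L.tail

/-- The set `D⁻¹(S)` of finite sequences of length `|S| + 1` mapping to `S`. -/
def DinvL (S : List Bool) : Set (List Bool) :=
  { T | T.length = S.length + 1 ∧ DmapL T = S }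

/-- Two finite sequences are disjoint if they share no `n`-tuple. -/
def disjL (A B : List Bool) (n : ℕ) : Prop :=
  ∀ i j, i ≤ A.length - n → j ≤ B.length - n → ltup A n i ≠ ltup B n j

/-- Two finite sequences are o-disjoint: disjoint, and neither contains the
reverse of an `n`-tuple of the other. -/
def oDisjL (A B : List Bool) (n : ℕ) : Prop :=
  disjL A B n ∧ ∀ i j, i ≤ A.length - n → j ≤ B.length - n →
    ltup A n i ≠ (ltup B n j).reverse

/-- A finite sequence is primitive if it is disjoint from its complement. -/
def primitiveL (A : List Bool) (n : ℕ) : Prop := disjL A (complL A) n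

/-- An ideal `AOS(n)`: its first `n-1` bits are `0` and its last `n-1` bits are `1`. -/
def idealA (L : List Bool) (n : ℕ) : Prop :=
  isAOS L n ∧ (∀ i, i < n - 1 → L.getD i false = false) ∧
    (∀ i, i < n - 1 → L.getD (L.length - 1 - i) false = true)

lemma ltup_ofFn_eq (s : ℕ → Bool) (n N i : ℕ) (hi : i + n ≤ N) :
    ltup (List.ofFn fun k : Fin N => s (k : ℕ)) n i = List.ofFn (tup s n i) := by
  apply List.ext_getElem
  · simp [ltup, tup]; omega
  · intro k h1 h2
    simp only [ltup, List.getElem_take, List.getElem_drop, List.getElem_ofFn, tup]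

lemma ofFn_tupRev {n : ℕ} (u : Fin n → Bool) :
    List.ofFn (tupRev u) = (List.ofFn u).reverse := by
  apply List.ext_getElem
  · simp
  · intro k h1 h2
    simp only [List.getElem_ofFn, List.getElem_reverse, List.getElem_ofFn, tupRev]
    congr 1
    ext
    simp [Fin.rev]
    omega

/-- If `S` is an orientable sequence of order `n` and period `m`, then
`(s_0, s_1, …, s_{n+m-2})` is an aperiodic orientable sequence of order `n` of
length `m + n - 1`. -/
theorem periodic_to_aperiodic (n m : ℕ) (s : ℕ → Bool)
    (h : isOrientable s n m) :
    (List.ofFn fun k : Fin (m + n - 1) => s (k : ℕ)).length = m + n - 1 ∧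
      isAOS (List.ofFn fun k : Fin (m + n - 1) => s (k : ℕ)) n := by
  -- n cannot be 0, since an empty tuple equals its own reverse
  have hn : 0 < n := by
    by_contra hn
    push_neg at hn
    interval_cases n
    exact h.2 0 0 (by funext k; exact absurd k.2 (Nat.not_lt_zero _))
  have hm : 0 < m := h.1.1.1
  have hlen : (List.ofFn fun k : Fin (m + n - 1) => s (k : ℕ)).length = m + n - 1 := by
    simp
  refine ⟨hlen, ?_⟩
  constructor
  · rw [hlen]; omega
  · intro i j hi hj
    rw [hlen] at hi hj
    have hi' : i + n ≤ m + n - 1 := by omega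
    have hj' : j + n ≤ m + n - 1 := by omega
    have hi2 : i < m := by omega
    have hj2 : j < m := by omega
    rw [ltup_ofFn_eq s n _ i hi', ltup_ofFn_eq s n _ j hj']
    constructor
    · intro heq
      have := h.1.2 i j (List.ofFn_injective heq)
      have := Nat.ModEq.eq_of_lt_of_lt this hi2 hj2
      exact this
    · rw [← ofFn_tupRev]
      intro heq
      exact h.2 i j (List.ofFn_injective heq)
end

section
/- Suppose S=(s_i) is an aperiodic orientable sequence of order n of length ℓ. Then D^{-1}(S) consists of an o-disjoint pair of primitive complementary aperiodic orientable sequences of order n+1, each of length ℓ+1. -/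
/-!
`D` forgets exactly the first bit, so `D⁻¹(S)` consists of the running xors `T` of `S` and its
complement. `D` sends the `(n+1)`-tuple of `T` at position `i` to the `n`-tuple of `S` at `i`,
commutes with reversal and cannot see complementation. Hence any coincidence among the tuples of
`T`, of its complement and their reverses yields one among the tuples of `S` and their reverses,
except a tuple equal to its own complement, which cannot exist.
-/

lemma DmapL_length (L : List Bool) : (DmapL L).length = L.length - 1 := by
  simp [DmapL]

lemma DmapL_getElem (L : List Bool) (k : ℕ) (h : k < (DmapL L).length) :
    (DmapL L)[k] = xor (L[k]'(by simp [DmapL_length] at h; omega))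
      (L[k + 1]'(by simp [DmapL_length] at h; omega)) := by
  simp only [DmapL, List.getElem_zipWith, List.getElem_tail]

lemma DmapL_cons_cons (a b : Bool) (t : List Bool) :
    DmapL (a :: b :: t) = xor a b :: DmapL (b :: t) := by
  simp [DmapL]

lemma ltup_length (L : List Bool) (n i : ℕ) :
    (ltup L n i).length = min n (L.length - i) := by
  simp [ltup]

lemma ltup_getElem (L : List Bool) (n i k : ℕ) (h : k < (ltup L n i).length) :
    (ltup L n i)[k] = L[i + k]'(by simp [ltup_length] at h; omega) := by
  simp only [ltup, List.getElem_take, List.getElem_drop]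

lemma complL_length (L : List Bool) : (complL L).length = L.length := by
  simp [complL]

lemma complL_reverse (L : List Bool) : complL L.reverse = (complL L).reverse := by
  simp [complL]

lemma complL_ltup (L : List Bool) (n i : ℕ) :
    ltup (complL L) n i = complL (ltup L n i) := by
  simp [ltup, complL, List.map_take, List.map_drop]

lemma ne_complL_of_ne_nil {L : List Bool} (h : L ≠ []) : L ≠ complL L := by
  cases L with
  | nil => exact absurd rfl h
  | cons a t => simp [complL]

lemma DmapL_complL (L : List Bool) : DmapL (complL L) = DmapL L := by
  apply List.ext_getElem
  · simp [DmapL_length, complL_length]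
  · intro k _ _
    simp only [DmapL_getElem, complL, List.getElem_map, Bool.not_xor_not]

lemma DmapL_reverse (L : List Bool) : DmapL L.reverse = (DmapL L).reverse := by
  apply List.ext_getElem
  · simp [DmapL_length]
  · intro k h _
    have hk : k < L.length - 1 := by simpa [DmapL_length] using h
    simp only [DmapL_getElem, List.getElem_reverse, DmapL_length]
    rw [Bool.xor_comm, getElem_congr_idx (show L.length - 1 - (k + 1) = L.length - 1 - 1 - k by omega),
      getElem_congr_idx (show L.length - 1 - k = L.length - 1 - 1 - k + 1 by omega)]

lemma DmapL_ltup (T : List Bool) (n i : ℕ) (h : i + (n + 1) ≤ T.length) :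
    DmapL (ltup T (n + 1) i) = ltup (DmapL T) n i := by
  apply List.ext_getElem
  · simp [DmapL_length, ltup_length]; omega
  · intro k _ _
    simp only [DmapL_getElem, ltup_getElem]
    rw [getElem_congr_idx (show i + (k + 1) = i + k + 1 by omega)]

/-- The element of `D⁻¹(S)` with first bit `b`: the running xors of `b :: S`. -/
def integL : Bool → List Bool → List Bool
  | b, [] => [b]
  | b, s :: S => b :: integL (xor b s) S

lemma integL_length (b : Bool) (S : List Bool) : (integL b S).length = S.length + 1 := by
  induction S generalizing b <;> simp [integL, *]

lemma DmapL_integL (b : Bool) (S : List Bool) : DmapL (integL b S) = S := by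
  induction S generalizing b with
  | nil => rfl
  | cons s S ih =>
    obtain ⟨r, hr⟩ : ∃ r, integL (xor b s) S = xor b s :: r := by cases S <;> exact ⟨_, rfl⟩
    rw [integL, hr, DmapL_cons_cons, ← hr, ih, ← Bool.xor_assoc, Bool.xor_self, Bool.false_xor]

lemma complL_integL (b : Bool) (S : List Bool) : complL (integL b S) = integL (!b) S := by
  induction S generalizing b with
  | nil => rfl
  | cons s S ih =>
    simp only [complL] at ih ⊢
    simp [integL, ih]

lemma integL_mem_DinvL (b : Bool) (S : List Bool) : integL b S ∈ DinvL S :=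
  ⟨integL_length b S, DmapL_integL b S⟩

lemma eq_integL_of_mem_DinvL {S U : List Bool} (hU : U ∈ DinvL S) :
    U = integL (U.headD false) S := by
  obtain ⟨hl, hD⟩ := hU
  induction S generalizing U with
  | nil => match U, hl with | [_], _ => rfl
  | cons s S ih =>
    match U, hl with
    | u :: v :: t, hl =>
      rw [DmapL_cons_cons, List.cons.injEq] at hD
      have ih := ih (U := v :: t) (by simpa using hl) hD.2
      rw [List.headD_cons] at ih ⊢
      rw [integL, ← hD.1, ← Bool.xor_assoc, Bool.xor_self, Bool.false_xor, ← ih]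

lemma DinvL_eq (S : List Bool) : DinvL S = {integL false S, integL true S} := by
  ext U
  refine ⟨fun hU => ?_, ?_⟩
  · rw [eq_integL_of_mem_DinvL hU]
    cases U.headD false <;> simp
  · rintro (rfl | rfl) <;> exact integL_mem_DinvL _ S

section DinvL

variable {n : ℕ} {S T : List Bool}

lemma complL_mem_DinvL (hT : T ∈ DinvL S) : complL T ∈ DinvL S :=
  ⟨(complL_length T).trans hT.1, (DmapL_complL T).trans hT.2⟩

lemma DmapL_ltup_of_mem_DinvL (hT : T ∈ DinvL S) {i : ℕ} (hn : n ≤ S.length)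
    (hi : i ≤ T.length - (n + 1)) : DmapL (ltup T (n + 1) i) = ltup S n i := by
  rw [DmapL_ltup T n i (by have := hT.1; omega), hT.2]

lemma isAOS_of_mem_DinvL (hT : T ∈ DinvL S) (hS : isAOS S n) : isAOS T (n + 1) := by
  obtain ⟨hn, hS⟩ := hS
  refine ⟨by have := hT.1; omega, fun i j hi hj => ?_⟩
  have hDi := DmapL_ltup_of_mem_DinvL hT hn hi
  have hDj := DmapL_ltup_of_mem_DinvL hT hn hj
  have hij := hS i j (by have := hT.1; omega) (by have := hT.1; omega)
  refine ⟨fun hEq => hij.1 ?_, fun hEq => hij.2 ?_⟩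
  · rw [← hDi, ← hDj, hEq]
  · rw [← hDi, ← hDj, hEq, DmapL_reverse]

/-- Complementary tuples have the same image under `D`, so they sit at the same
position of `S`; but no tuple is its own complement. -/
lemma ltup_ne_complL_ltup (hT : T ∈ DinvL S) (hS : isAOS S n) {i j : ℕ}
    (hi : i ≤ T.length - (n + 1)) (hj : j ≤ T.length - (n + 1)) :
    ltup T (n + 1) i ≠ complL (ltup T (n + 1) j) := by
  intro hEq
  have hij : i = j := by
    refine (hS.2 i j (by have := hT.1; omega) (by have := hT.1; omega)).1 ?_
    rw [← DmapL_ltup_of_mem_DinvL hT hS.1 hi, ← DmapL_ltup_of_mem_DinvL hT hS.1 hj, hEq,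
      DmapL_complL]
  subst hij
  refine ne_complL_of_ne_nil ?_ hEq
  rw [← List.length_pos_iff, ltup_length]
  have := hT.1
  omega

lemma ltup_ne_reverse_complL_ltup (hT : T ∈ DinvL S) (hS : isAOS S n) {i j : ℕ}
    (hi : i ≤ T.length - (n + 1)) (hj : j ≤ T.length - (n + 1)) :
    ltup T (n + 1) i ≠ (complL (ltup T (n + 1) j)).reverse := by
  intro hEq
  apply (hS.2 i j (by have := hT.1; omega) (by have := hT.1; omega)).2
  rw [← DmapL_ltup_of_mem_DinvL hT hS.1 hi, ← DmapL_ltup_of_mem_DinvL hT hS.1 hj, hEq,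
    ← complL_reverse, DmapL_complL, DmapL_reverse]

lemma primitiveL_of_mem_DinvL (hT : T ∈ DinvL S) (hS : isAOS S n) : primitiveL T (n + 1) := by
  intro i j hi hj
  rw [complL_length] at hj
  rw [complL_ltup]
  exact ltup_ne_complL_ltup hT hS hi hj

lemma oDisjL_complL_of_mem_DinvL (hT : T ∈ DinvL S) (hS : isAOS S n) :
    oDisjL T (complL T) (n + 1) := by
  refine ⟨primitiveL_of_mem_DinvL hT hS, fun i j hi hj => ?_⟩
  rw [complL_length] at hj
  rw [complL_ltup]
  exact ltup_ne_reverse_complL_ltup hT hS hi hj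

end DinvL

/-- Theorem 8: if `S` is an aperiodic orientable sequence of order `n` of length
`ℓ`, then `D⁻¹(S)` consists of an o-disjoint pair of primitive complementary
aperiodic orientable sequences of order `n+1`, each of length `ℓ + 1`. -/
theorem lempel_aperiodic (n ℓ : ℕ) (S : List Bool)
    (hlen : S.length = ℓ) (h : isAOS S n) :
    ∃ T T' : List Bool, T ≠ T' ∧ DinvL S = {T, T'} ∧ T' = complL T ∧
      T.length = ℓ + 1 ∧ T'.length = ℓ + 1 ∧
      isAOS T (n + 1) ∧ isAOS T' (n + 1) ∧ oDisjL T T' (n + 1) ∧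
      primitiveL T (n + 1) ∧ primitiveL T' (n + 1) := by
  subst hlen
  set T := integL false S
  have hT : T ∈ DinvL S := integL_mem_DinvL false S
  have hT' : complL T ∈ DinvL S := complL_mem_DinvL hT
  have hne : T ≠ complL T :=
    ne_complL_of_ne_nil (List.ne_nil_of_length_pos (by rw [hT.1]; omega))
  refine ⟨T, complL T, hne, ?_, rfl, hT.1, hT'.1, isAOS_of_mem_DinvL hT h,
    isAOS_of_mem_DinvL hT' h, oDisjL_complL_of_mem_DinvL hT h,
    primitiveL_of_mem_DinvL hT h, primitiveL_of_mem_DinvL hT' h⟩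
  rw [DinvL_eq, complL_integL]
  rfl
end

section
/- Suppose S=(s_i) is an ideal aperiodic orientable sequence of order n > 1. Then D^{-1}(S) = {T, T̄} where T and T̄ are complementary, T begins with the n-tuple 0^n and ends with the n-tuple of alternating bits ending in T's last bit, and T̄ begins with 1^n and ends with the complementary alternating n-tuple. -/
/-- A finite sequence is alternating if its consecutive bits all differ. -/
def altL (L : List Bool) : Prop :=
  ∀ i, i + 1 < L.length → L.getD (i + 1) false = !(L.getD i false)


/-! The first bit of `T ∈ D⁻¹(S)` and the recurrence `tᵢ₊₁ = tᵢ ⊕ sᵢ` determine `T`, so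
`D⁻¹(S)` consists of the two prefix-xor sequences `S.scanl xor b`, which are complements of each
other. Along the zero prefix of an ideal `S` the recurrence keeps `T` constant, so `T` begins
with `n` equal bits; along its all-ones suffix it flips every bit, so `T` ends alternating. -/

lemma dmapL_cons_cons (a b : Bool) (L : List Bool) :
    DmapL (a :: b :: L) = xor a b :: DmapL (b :: L) := rfl

lemma dmapL_scanl_xor (S : List Bool) (b : Bool) : DmapL (S.scanl xor b) = S := by
  induction S generalizing b with
  | nil => rfl
  | cons s S ih =>
    cases S with
    | nil => simp [DmapL]
    | cons s' S =>
      rw [List.scanl_cons, List.scanl_cons, dmapL_cons_cons, ← List.scanl_cons, ih]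
      simp

lemma eq_scanl_xor_of_dmapL_eq {S T : List Bool} (hlen : T.length = S.length + 1)
    (hT : DmapL T = S) : T = S.scanl xor T.headI := by
  induction S generalizing T with
  | nil =>
    obtain ⟨t, rfl⟩ := List.length_eq_one_iff.mp hlen
    rfl
  | cons s S ih =>
    match T, hlen with
    | t :: t' :: T, hlen =>
      rw [dmapL_cons_cons, List.cons.injEq] at hT
      obtain ⟨rfl, hT⟩ := hT
      rw [List.scanl_cons, List.headI_cons, ← Bool.xor_assoc, Bool.xor_self, Bool.false_xor]
      exact congrArg (t :: ·) (ih (by simpa using hlen) hT)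

lemma complL_scanl_xor (S : List Bool) (b : Bool) :
    complL (S.scanl xor b) = S.scanl xor (!b) := by
  induction S generalizing b with
  | nil => rfl
  | cons s S ih =>
    simp only [List.scanl_cons, complL, List.map_cons] at ih ⊢
    rw [ih, Bool.not_xor]

lemma dinvL_eq (S : List Bool) : DinvL S = {S.scanl xor false, S.scanl xor true} := by
  ext T
  simp only [DinvL, Set.mem_ofPred_eq, Set.mem_insert_iff, Set.mem_singleton_iff]
  constructor
  · rintro ⟨hlen, hT⟩
    rw [eq_scanl_xor_of_dmapL_eq hlen hT]
    cases T.headI <;> simp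
  · rintro (rfl | rfl) <;> exact ⟨List.length_scanl, dmapL_scanl_xor S _⟩

lemma ne_complL_self {L : List Bool} (hL : L ≠ []) : L ≠ complL L := by
  obtain ⟨a, L, rfl⟩ := List.exists_cons_of_ne_nil hL
  simp [complL]

lemma getD_scanl_xor_succ {S : List Bool} {i : ℕ} (hi : i < S.length) (b : Bool) :
    (S.scanl xor b).getD (i + 1) false = xor ((S.scanl xor b).getD i false) (S.getD i false) := by
  have hi' : i + 1 < (S.scanl xor b).length := by rw [List.length_scanl]; omega
  rw [List.getD_eq_getElem _ _ hi', List.getD_eq_getElem _ _ (by omega),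
    List.getD_eq_getElem _ _ hi, List.getElem_succ_scanl]

lemma getD_scanl_xor_of_prefix_false {S : List Bool} {k : ℕ} (hk : k ≤ S.length)
    (hS : ∀ j < k, S.getD j false = false) (b : Bool) :
    ∀ i ≤ k, (S.scanl xor b).getD i false = b := by
  intro i hi
  induction i with
  | zero => simp [List.getD_eq_getElem?_getD]
  | succ i ih => rw [getD_scanl_xor_succ (by omega), ih (by omega), hS i hi, Bool.xor_false]

lemma getD_drop {α : Type*} (L : List α) (k i : ℕ) (d : α) :
    (L.drop k).getD i d = L.getD (k + i) d := by
  simp [List.getD_eq_getElem?_getD]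

lemma altL_drop_scanl_xor {S : List Bool} {k : ℕ}
    (hS : ∀ j, k ≤ j → j < S.length → S.getD j false = true) (b : Bool) :
    altL ((S.scanl xor b).drop k) := by
  intro i hi
  rw [List.length_drop, List.length_scanl] at hi
  rw [getD_drop, getD_drop, ← add_assoc, getD_scanl_xor_succ (by omega),
    hS _ (by omega) (by omega), Bool.xor_true]

theorem dinv_of_ideal_general (n : ℕ) (S : List Bool)
    (hS : idealA S n) :
    ∃ T : List Bool, DinvL S = {T, complL T} ∧ T ≠ complL T ∧
      (∀ i, i < n → T.getD i false = false) ∧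
      altL (T.drop (T.length - n)) ∧
      (∀ i, i < n → (complL T).getD i false = true) ∧
      altL ((complL T).drop ((complL T).length - n)) := by
  obtain ⟨⟨hlen, -⟩, hzero, hone⟩ := hS
  have hconst (b : Bool) : ∀ i < n, (S.scanl xor b).getD i false = b := fun i hi =>
    getD_scanl_xor_of_prefix_false (by omega) hzero b i (by omega)
  have halt (b : Bool) : altL ((S.scanl xor b).drop ((S.scanl xor b).length - n)) := by
    refine altL_drop_scanl_xor (fun j hj hjS => ?_) b
    rw [List.length_scanl] at hj
    simpa [show S.length - 1 - (S.length - 1 - j) = j by omega]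
      using hone (S.length - 1 - j) (by omega)
  refine ⟨S.scanl xor false, ?_, ne_complL_self (by simp), hconst false, halt false, ?_, ?_⟩ <;>
    rw [complL_scanl_xor, Bool.not_false]
  exacts [dinvL_eq S, hconst true, halt true]

/-- Lemma 9: if `S` is an ideal `AOS(n)` with `n > 1`, then `D⁻¹(S) = {T, T̄}`
where `T` and `T̄` are complementary, `T` begins with `0^n` and ends with an
alternating `n`-tuple (ending in `T`'s last bit), and `T̄` begins with `1^n`
and ends with the complementary alternating `n`-tuple. -/
theorem dinv_of_ideal (n : ℕ) (S : List Bool) (hn : 1 < n)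
    (hS : idealA S n) :
    ∃ T : List Bool, DinvL S = {T, complL T} ∧ T ≠ complL T ∧
      (∀ i, i < n → T.getD i false = false) ∧
      altL (T.drop (T.length - n)) ∧
      (∀ i, i < n → (complL T).getD i false = true) ∧
      altL ((complL T).drop ((complL T).length - n)) :=
  dinv_of_ideal_general n S hS
end

section
/- Suppose n is even, S=(s_i) is an ideal aperiodic orientable sequence of order n of length ℓ, and let D^{-1}(S) = {T, T̄} where T is the element of D^{-1}(S) beginning with 0^n. Let U = T̄^R (the reverse of the complement of T), and let V be the sequence of length 2ℓ−n+2 consisting of the ℓ+1 bits of T followed by the final ℓ−n+1 bits of U (i.e., U with its first n bits omitted). Then V is an ideal aperiodic orientable sequence of order n+1. -/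
namespace AOSaux

lemma length_ltup (L : List Bool) (n i : ℕ) (h : i + n ≤ L.length) :
    (ltup L n i).length = n := by
  simp [ltup]; omega

lemma getElem_ltup (L : List Bool) (n i k : ℕ) (h : i + n ≤ L.length) (hk : k < n) :
    (ltup L n i)[k]'(by rw [length_ltup L n i h]; exact hk) = L[i+k]'(by omega) := by
  simp [ltup, List.getElem_take, List.getElem_drop]

lemma length_compl (L : List Bool) : (complL L).length = L.length := by simp [complL]

lemma getElem_compl (L : List Bool) (k : ℕ) (h : k < L.length) :
    (complL L)[k]'(by simp [complL]; omega) = !(L[k]) := by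
  simp [complL]

lemma length_Dmap (L : List Bool) : (DmapL L).length = L.length - 1 := by
  simp [DmapL]

lemma getElem_Dmap (L : List Bool) (k : ℕ) (h : k + 1 < L.length) :
    (DmapL L)[k]'(by simp [DmapL]; omega) = xor (L[k]'(by omega)) (L[k+1]) := by
  simp [DmapL, List.getElem_zipWith, List.getElem_tail]

lemma compl_compl (L : List Bool) : complL (complL L) = L := by
  simp only [complL, List.map_map, Function.comp_def, Bool.not_not, List.map_id']

lemma compl_inj {A B : List Bool} (h : complL A = complL B) : A = B := by
  have := congrArg complL h; rwa [compl_compl, compl_compl] at this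

lemma compl_reverse (L : List Bool) : complL (L.reverse) = (complL L).reverse := by
  simp [complL]

lemma ne_compl_self {A : List Bool} (h : A ≠ []) : A ≠ complL A := by
  intro he
  have hl : 0 < A.length := List.length_pos_iff.mpr h
  have := congrArg (fun l => l.getD 0 false) he
  simp only [List.getD_eq_getElem _ _ hl,
    List.getD_eq_getElem _ _ (show 0 < (complL A).length by rw [length_compl]; exact hl)] at this
  rw [getElem_compl A 0 hl] at this
  exact (Bool.eq_not_self _).mp this

lemma compl_ltup (L : List Bool) (n i : ℕ) :
    complL (ltup L n i) = ltup (complL L) n i := by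
  simp [ltup, complL, List.map_take, List.map_drop]

lemma reverse_ltup (L : List Bool) (n i : ℕ) (h : i + n ≤ L.length) :
    (ltup L n i).reverse = ltup L.reverse n (L.length - n - i) := by
  apply List.ext_getElem
  · rw [List.length_reverse, length_ltup L n i h,
      length_ltup _ n _ (by rw [List.length_reverse]; omega)]
  · intro k h1 h2
    have hk : k < n := by rw [List.length_reverse, length_ltup L n i h] at h1; exact h1
    rw [List.getElem_reverse]
    simp only [length_ltup L n i h]
    rw [getElem_ltup L n i (n-1-k) h (by omega),
      getElem_ltup L.reverse n (L.length - n - i) k (by rw [List.length_reverse]; omega) hk,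
      List.getElem_reverse]
    rw [← List.getD_eq_getElem L false, ← List.getD_eq_getElem L false]
    congr 1
    omega

lemma Dmap_ltup (L : List Bool) (n i : ℕ) (h : i + (n+1) ≤ L.length) :
    DmapL (ltup L (n+1) i) = ltup (DmapL L) n i := by
  apply List.ext_getElem
  · rw [length_Dmap, length_ltup L (n+1) i h,
      length_ltup _ n _ (by rw [length_Dmap]; omega)]
    omega
  · intro k h1 h2
    have hk : k < n := by rw [length_Dmap, length_ltup L (n+1) i h] at h1; omega
    rw [getElem_Dmap _ k (by rw [length_ltup L (n+1) i h]; omega),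
      getElem_ltup L (n+1) i k h (by omega),
      getElem_ltup L (n+1) i (k+1) h (by omega),
      getElem_ltup (DmapL L) n i k (by rw [length_Dmap]; omega) hk,
      getElem_Dmap L (i+k) (by omega)]
    rfl

lemma Dmap_compl (L : List Bool) : DmapL (complL L) = DmapL L := by
  apply List.ext_getElem
  · rw [length_Dmap, length_Dmap, length_compl]
  · intro k h1 h2
    have hk : k + 1 < L.length := by rw [length_Dmap, length_compl] at h1; omega
    rw [getElem_Dmap _ k (by rw [length_compl]; omega), getElem_Dmap L k hk,
      getElem_compl L k (by omega), getElem_compl L (k+1) hk]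
    cases L[k] <;> cases L[k+1] <;> rfl

lemma Dmap_reverse (L : List Bool) : DmapL (L.reverse) = (DmapL L).reverse := by
  apply List.ext_getElem
  · rw [length_Dmap, List.length_reverse, List.length_reverse, length_Dmap]
  · intro k h1 h2
    have hk : k + 1 < L.length := by rw [length_Dmap, List.length_reverse] at h1; omega
    rw [getElem_Dmap _ k (by rw [List.length_reverse]; omega),
      List.getElem_reverse, List.getElem_reverse, List.getElem_reverse]
    simp only [length_Dmap]
    rw [getElem_Dmap L (L.length - 1 - 1 - k) (by omega)]
    rw [← List.getD_eq_getElem L false, ← List.getD_eq_getElem L false,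
      ← List.getD_eq_getElem L false, ← List.getD_eq_getElem L false]
    have e1 : L.length - 1 - 1 - k + 1 = L.length - 1 - k := by omega
    have e2 : L.length - 1 - (k+1) = L.length - 1 - 1 - k := by omega
    rw [e1, e2]
    exact Bool.xor_comm _ _

end AOSaux

open AOSaux

/-- Theorem 10, even case: let `n` be even, `S` an ideal `AOS(n)` of length `ℓ`,
`T` the element of `D⁻¹(S)` beginning with `0^n`, and `U = T̄^R`. Then `V`, the
sequence of length `2ℓ - n + 2` consisting of the `ℓ+1` bits of `T` followed by
the final `ℓ - n + 1` bits of `U` (i.e. `U` with its first `n` bits omitted), is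
an ideal `AOS(n+1)`. -/
theorem merge_even (n ℓ : ℕ) (S T : List Bool) (hne : Even n) (hn : 1 < n)
    (hlen : S.length = ℓ) (hS : idealA S n) (hT : T ∈ DinvL S)
    (hT0 : ∀ i, i < n → T.getD i false = false) :
    (T ++ ((complL T).reverse).drop n).length = 2 * ℓ - n + 2 ∧
      idealA (T ++ ((complL T).reverse).drop n) (n + 1) := by
  obtain ⟨⟨hnle, hSpair⟩, hS0, hS1⟩ := hS
  obtain ⟨hTlen, hTD⟩ := hT
  have hSl : S.length = ℓ := hlen
  have hTl : T.length = ℓ + 1 := by omega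
  have hnl : n ≤ ℓ := by omega
  have hUl : ((complL T).reverse).length = ℓ + 1 := by
    rw [List.length_reverse, length_compl, hTl]
  have hVlen : (T ++ ((complL T).reverse).drop n).length = 2 * ℓ - n + 2 := by
    rw [List.length_append, List.length_drop, hTl, hUl]; omega
  have htk : (T.take (ℓ+1-n)).length = ℓ+1-n := by
    rw [List.length_take, hTl]; omega
  -- the D relation pointwise
  have hst : ∀ m, m + 1 < ℓ + 1 →
      S.getD m false = xor (T.getD m false) (T.getD (m+1) false) := by
    intro m hm
    have h0 : (DmapL T).getD m false = S.getD m false := by rw [hTD]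
    rw [← h0, List.getD_eq_getElem _ _ (by rw [length_Dmap, hTl]; omega),
      getElem_Dmap T m (by rw [hTl]; omega),
      ← List.getD_eq_getElem T false, ← List.getD_eq_getElem T false]
  -- last n-1 bits of S are 1
  have hsm : ∀ m, ℓ + 1 - n ≤ m → m < ℓ → S.getD m false = true := by
    intro m h1 h2
    have h3 := hS1 (ℓ - 1 - m) (by omega)
    rw [hSl, show ℓ - 1 - (ℓ - 1 - m) = m by omega] at h3
    exact h3
  -- T alternates on its last n bits
  have halt : ∀ m, ℓ + 1 - n ≤ m → m < ℓ →
      T.getD (m+1) false = !(T.getD m false) := by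
    intro m h1 h2
    have h4 : xor (T.getD m false) (T.getD (m+1) false) = true := by
      rw [← hst m (by omega)]; exact hsm m h1 h2
    revert h4
    cases hb : T.getD m false <;> cases hc : T.getD (m+1) false <;> decide
  have hpar : ∀ k, k < n →
      T.getD (ℓ+1-n+k) false = xor (T.getD (ℓ+1-n) false) (decide (k % 2 = 1)) := by
    intro k
    induction k with
    | zero => intro _; simp
    | succ k ih =>
      intro hk
      rw [show ℓ+1-n+(k+1) = (ℓ+1-n+k)+1 by omega,
        halt (ℓ+1-n+k) (by omega) (by omega), ih (by omega)]
      by_cases hp : k % 2 = 1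
      · have hp2 : ¬((k+1) % 2 = 1) := by omega
        simp [hp, hp2]
      · have hp2 : (k+1) % 2 = 1 := by omega
        simp [hp, hp2]
  obtain ⟨c, hc⟩ := hne
  have hkey : ∀ k, k < n → T.getD (ℓ+1-n+k) false = !(T.getD (ℓ-k) false) := by
    intro k hk
    rw [show ℓ - k = ℓ+1-n+(n-1-k) by omega, hpar k hk, hpar (n-1-k) (by omega)]
    by_cases hp : k % 2 = 1
    · have hp2 : ¬((n-1-k) % 2 = 1) := by omega
      simp [hp, hp2]
    · have hp2 : (n-1-k) % 2 = 1 := by omega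
      simp [hp, hp2]
  -- getD description of the reversed complement
  have hUg : ∀ j, j < ℓ + 1 →
      ((complL T).reverse).getD j false = !(T.getD (ℓ-j) false) := by
    intro j hj
    rw [List.getD_eq_getElem _ _ (show j < ((complL T).reverse).length by omega),
      List.getElem_reverse]
    simp only [length_compl, hTl]
    rw [getElem_compl T (ℓ+1-1-j) (by omega), ← List.getD_eq_getElem T false,
      show ℓ+1-1-j = ℓ-j by omega]
  -- the overlap identity
  have hover : T.drop (ℓ+1-n) = ((complL T).reverse).take n := by
    apply List.ext_getElem
    · rw [List.length_drop, hTl, List.length_take, hUl]; omega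
    · intro k h1 h2
      have hk : k < n := by rw [List.length_drop, hTl] at h1; omega
      rw [List.getElem_drop, List.getElem_take, ← List.getD_eq_getElem T false,
        ← List.getD_eq_getElem ((complL T).reverse) false, hUg k (by omega), hkey k hk]
  have hVeq : T ++ ((complL T).reverse).drop n
      = T.take (ℓ+1-n) ++ (complL T).reverse := by
    calc T ++ ((complL T).reverse).drop n
        = (T.take (ℓ+1-n) ++ T.drop (ℓ+1-n)) ++ ((complL T).reverse).drop n := by
          rw [List.take_append_drop]
      _ = T.take (ℓ+1-n) ++ (((complL T).reverse).take n ++ ((complL T).reverse).drop n) := by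
          rw [List.append_assoc, hover]
      _ = T.take (ℓ+1-n) ++ (complL T).reverse := by rw [List.take_append_drop]
  have hVeql : (T.take (ℓ+1-n) ++ (complL T).reverse).length = 2*ℓ-n+2 := by
    rw [List.length_append, htk, hUl]; omega
  -- windows of V within T
  have hWT : ∀ p, p ≤ ℓ - n →
      ltup (T ++ ((complL T).reverse).drop n) (n+1) p = ltup T (n+1) p := by
    intro p hp
    apply List.ext_getElem
    · rw [length_ltup _ (n+1) p (by omega), length_ltup T (n+1) p (by omega)]
    · intro k h1 h2
      have hk : k < n + 1 := by rw [length_ltup _ (n+1) p (by omega)] at h1; exact h1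
      rw [getElem_ltup _ (n+1) p k (by omega) hk, getElem_ltup T (n+1) p k (by omega) hk,
        List.getElem_append_left (show p + k < T.length by omega)]
  -- windows of V within U
  have hWU : ∀ p, ℓ - n + 1 ≤ p → p ≤ 2*ℓ-2*n+1 →
      ltup (T ++ ((complL T).reverse).drop n) (n+1) p
        = ltup ((complL T).reverse) (n+1) (p - (ℓ+1-n)) := by
    intro p hp1 hp2
    rw [hVeq]
    apply List.ext_getElem
    · rw [length_ltup _ (n+1) p (by omega), length_ltup _ (n+1) _ (by omega)]
    · intro k h1 h2
      have hk : k < n + 1 := by rw [length_ltup _ (n+1) p (by omega)] at h1; exact h1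
      rw [getElem_ltup _ (n+1) p k (by omega) hk,
        getElem_ltup _ (n+1) (p - (ℓ+1-n)) k (by omega) hk,
        List.getElem_append_right (show (T.take (ℓ+1-n)).length ≤ p + k by omega),
        ← List.getD_eq_getElem ((complL T).reverse) false,
        ← List.getD_eq_getElem ((complL T).reverse) false,
        show p + k - (T.take (ℓ+1-n)).length = p - (ℓ+1-n) + k by rw [htk]; omega]
  -- windows of U vs windows of T
  have hUW : ∀ j, j ≤ ℓ - n →
      ltup ((complL T).reverse) (n+1) j = (complL (ltup T (n+1) (ℓ-n-j))).reverse := by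
    intro j hj
    have h := reverse_ltup (complL T) (n+1) (ℓ-n-j) (by rw [length_compl, hTl]; omega)
    rw [length_compl, hTl, show ℓ+1-(n+1)-(ℓ-n-j) = j by omega] at h
    rw [← h, compl_ltup]
  -- facts about S from AOS
  have hXinj : ∀ i j, i ≤ ℓ - n → j ≤ ℓ - n → ltup S n i = ltup S n j → i = j := by
    intro i j hi hj
    exact (hSpair i j (by omega) (by omega)).1
  have hXrev : ∀ i j, i ≤ ℓ - n → j ≤ ℓ - n → ltup S n i ≠ (ltup S n j).reverse := by
    intro i j hi hj
    exact (hSpair i j (by omega) (by omega)).2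
  have hDW : ∀ i, i ≤ ℓ - n → DmapL (ltup T (n+1) i) = ltup S n i := by
    intro i hi
    rw [Dmap_ltup T n i (by omega), hTD]
  have hWnil : ∀ i, i ≤ ℓ - n → ltup T (n+1) i ≠ [] := by
    intro i hi h
    have := length_ltup T (n+1) i (by omega)
    rw [h] at this
    simp at this
  -- the four key facts about windows of T
  have F1 : ∀ i j, i ≤ ℓ - n → j ≤ ℓ - n → ltup T (n+1) i = ltup T (n+1) j → i = j := by
    intro i j hi hj h
    apply hXinj i j hi hj
    rw [← hDW i hi, ← hDW j hj, h]
  have F2 : ∀ i j, i ≤ ℓ - n → j ≤ ℓ - n → ltup T (n+1) i ≠ (ltup T (n+1) j).reverse := by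
    intro i j hi hj h
    apply hXrev i j hi hj
    rw [← hDW i hi, ← hDW j hj, h, Dmap_reverse]
  have F3 : ∀ i j, i ≤ ℓ - n → j ≤ ℓ - n → ltup T (n+1) i ≠ complL (ltup T (n+1) j) := by
    intro i j hi hj h
    have hij : i = j := by
      apply hXinj i j hi hj
      rw [← hDW i hi, ← hDW j hj, ← Dmap_compl (ltup T (n+1) j), h]
    rw [hij] at h
    exact ne_compl_self (hWnil j hj) h
  have F4 : ∀ i j, i ≤ ℓ - n → j ≤ ℓ - n →
      ltup T (n+1) i ≠ (complL (ltup T (n+1) j)).reverse := by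
    intro i j hi hj h
    apply hXrev i j hi hj
    rw [← hDW i hi, ← hDW j hj, h, Dmap_reverse, Dmap_compl]
  refine ⟨hVlen, ⟨by omega, ?_⟩, ?_, ?_⟩
  · -- main pairwise condition
    intro p q hp hq
    have hp2 : p ≤ 2*ℓ-2*n+1 := by omega
    have hq2 : q ≤ 2*ℓ-2*n+1 := by omega
    by_cases hpT : p ≤ ℓ - n <;> by_cases hqT : q ≤ ℓ - n
    · rw [hWT p hpT, hWT q hqT]
      exact ⟨F1 p q hpT hqT, F2 p q hpT hqT⟩
    · have hq' : ℓ - n - (q - (ℓ+1-n)) = 2*ℓ-2*n+1-q := by omega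
      rw [hWT p hpT, hWU q (by omega) hq2, hUW (q - (ℓ+1-n)) (by omega), hq']
      constructor
      · intro h
        exact absurd h (F4 p (2*ℓ-2*n+1-q) hpT (by omega))
      · rw [ne_eq, List.reverse_reverse]
        exact F3 p (2*ℓ-2*n+1-q) hpT (by omega)
    · have hp' : ℓ - n - (p - (ℓ+1-n)) = 2*ℓ-2*n+1-p := by omega
      rw [hWU p (by omega) hp2, hUW (p - (ℓ+1-n)) (by omega), hp', hWT q hqT]
      constructor
      · intro h
        exact absurd h.symm (F4 q (2*ℓ-2*n+1-p) hqT (by omega))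
      · rw [ne_eq, List.reverse_inj]
        intro h
        exact F3 q (2*ℓ-2*n+1-p) hqT (by omega) h.symm
    · have hp' : ℓ - n - (p - (ℓ+1-n)) = 2*ℓ-2*n+1-p := by omega
      have hq' : ℓ - n - (q - (ℓ+1-n)) = 2*ℓ-2*n+1-q := by omega
      rw [hWU p (by omega) hp2, hUW (p - (ℓ+1-n)) (by omega), hp',
        hWU q (by omega) hq2, hUW (q - (ℓ+1-n)) (by omega), hq']
      constructor
      · intro h
        rw [List.reverse_inj] at h
        have := F1 (2*ℓ-2*n+1-p) (2*ℓ-2*n+1-q) (by omega) (by omega) (compl_inj h)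
        omega
      · rw [ne_eq, List.reverse_reverse]
        intro h
        rw [← compl_reverse] at h
        exact F2 (2*ℓ-2*n+1-q) (2*ℓ-2*n+1-p) (by omega) (by omega) (compl_inj h).symm
  · -- first n bits of V are 0
    intro i hi
    have hi2 : i < n := by omega
    rw [List.getD_eq_getElem _ _
        (show i < (T ++ ((complL T).reverse).drop n).length by omega),
      List.getElem_append_left (show i < T.length by omega),
      ← List.getD_eq_getElem T false]
    exact hT0 i hi2
  · -- last n bits of V are 1
    intro i hi
    have hi2 : i < n := by omega
    rw [hVlen, hVeq,
      List.getD_eq_getElem _ _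
        (show 2*ℓ-n+2-1-i < (T.take (ℓ+1-n) ++ (complL T).reverse).length by omega),
      List.getElem_append_right (show (T.take (ℓ+1-n)).length ≤ 2*ℓ-n+2-1-i by omega),
      ← List.getD_eq_getElem ((complL T).reverse) false,
      show 2*ℓ-n+2-1-i - (T.take (ℓ+1-n)).length = ℓ - i by rw [htk]; omega,
      hUg (ℓ-i) (by omega), show ℓ - (ℓ-i) = i by omega, hT0 i hi2]
    rfl
end

section
/- Suppose n is odd, S=(s_i) is an ideal aperiodic orientable sequence of order n of length ℓ, and let D^{-1}(S) = {T, T̄} where T is the element of D^{-1}(S) beginning with 0^n. Let U = T̄^R (the reverse of the complement of T), and let V be the sequence of length 2ℓ−n+3 consisting of the ℓ+1 bits of T followed by the final ℓ−n+2 bits of U (i.e., U with its first n−1 bits omitted). Then V is an ideal aperiodic orientable sequence of order n+1. -/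
lemma mo_ltup_ofFn (L : List Bool) (m i : ℕ) (h : i + m ≤ L.length) :
    ltup L m i = List.ofFn (fun k : Fin m => L.getD (i + (k : ℕ)) false) := by
  apply List.ext_getElem
  · simp [ltup]; omega
  · intro k h1 h2
    simp only [ltup] at h1 ⊢
    rw [List.getElem_take, List.getElem_drop, List.getElem_ofFn]
    rw [List.getD_eq_getElem]

lemma mo_ofFn_reverse {m : ℕ} (f : Fin m → Bool) :
    (List.ofFn f).reverse = List.ofFn (fun k => f k.rev) := by
  apply List.ext_getElem
  · simp
  · intro k h1 h2
    simp only [List.length_reverse, List.length_ofFn] at h1 h2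
    rw [List.getElem_reverse, List.getElem_ofFn, List.getElem_ofFn]
    congr 1
    apply Fin.ext
    simp [Fin.val_rev]
    omega

lemma mo_ltup_eq_iff (L : List Bool) (m i j : ℕ) (hi : i + m ≤ L.length) (hj : j + m ≤ L.length) :
    ltup L m i = ltup L m j ↔ ∀ k, k < m → L.getD (i + k) false = L.getD (j + k) false := by
  rw [mo_ltup_ofFn L m i hi, mo_ltup_ofFn L m j hj, List.ofFn_inj]
  constructor
  · intro h k hk; exact congrFun h ⟨k, hk⟩
  · intro h; funext k; exact h k k.isLt

lemma mo_ltup_rev_iff (L : List Bool) (m i j : ℕ) (hi : i + m ≤ L.length) (hj : j + m ≤ L.length) :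
    ltup L m i = (ltup L m j).reverse ↔
      ∀ k, k < m → L.getD (i + k) false = L.getD (j + (m - 1 - k)) false := by
  rw [mo_ltup_ofFn L m i hi, mo_ltup_ofFn L m j hj, mo_ofFn_reverse, List.ofFn_inj]
  constructor
  · intro h k hk
    have := congrFun h ⟨k, hk⟩
    simp only [Fin.rev, Fin.val_rev] at this
    rwa [show m - (k + 1) = m - 1 - k from by omega] at this
  · intro h; funext k
    have := h k k.isLt
    simp only [Fin.rev, Fin.val_rev]
    rwa [show m - 1 - (k:ℕ) = m - ((k:ℕ) + 1) from by omega] at this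

lemma mo_talt (n ℓ : ℕ) (hn : 1 < n) (hnl : n ≤ ℓ) (t s : ℕ → Bool)
    (hts : ∀ k, k < ℓ → s k = xor (t k) (t (k+1)))
    (hS1 : ∀ k, ℓ - n + 1 ≤ k → k < ℓ → s k = true) :
    ∀ j, j < n → t (ℓ - j) = xor (decide (j % 2 = 1)) (t ℓ) := by
  intro j
  induction j with
  | zero => intro _; simp
  | succ m ih =>
    intro h
    have hm := ih (by omega)
    have h1 : s (ℓ - (m+1)) = true := hS1 _ (by omega) (by omega)
    rw [hts _ (by omega), show ℓ - (m+1) + 1 = ℓ - m from by omega] at h1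
    have h2 : t (ℓ - (m+1)) = ! t (ℓ - m) := by
      revert h1; cases t (ℓ - (m+1)) <;> cases t (ℓ - m) <;> simp
    rw [h2, hm]
    rcases Nat.mod_two_eq_zero_or_one m with e | e
    · have e2 : (m+1) % 2 = 1 := by omega
      simp [e, e2]
    · have e2 : (m+1) % 2 = 0 := by omega
      simp [e, e2]

lemma mo_key (n ℓ : ℕ) (hn : 1 < n) (hodd : Odd n) (hnl : n ≤ ℓ) (t s v : ℕ → Bool)
    (hts : ∀ k, k < ℓ → s k = xor (t k) (t (k+1)))
    (hS1 : ∀ k, ℓ - n + 1 ≤ k → k < ℓ → s k = true)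
    (hSinj : ∀ i j, i ≤ ℓ - n → j ≤ ℓ - n → (∀ k, k < n → s (i+k) = s (j+k)) → i = j)
    (hSrev : ∀ i j, i ≤ ℓ - n → j ≤ ℓ - n → ¬ (∀ k, k < n → s (i+k) = s (j+(n-1-k))))
    (hvT : ∀ x, x ≤ ℓ → v x = t x)
    (hvU : ∀ x, ℓ - n + 2 ≤ x → x ≤ 2*ℓ - n + 2 → v x = ! t (2*ℓ - n + 2 - x)) :
    ∀ i j, i ≤ 2*ℓ-2*n+2 → j ≤ 2*ℓ-2*n+2 →
      ((∀ k, k ≤ n → v (i+k) = v (j+k)) → i = j) ∧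
      ¬(∀ k, k ≤ n → v (i+k) = v (j+(n-k))) := by
  have hSnp : ∀ i, i ≤ ℓ - n → ¬ (∀ k, k < n → s (i+k) = true) := by
    intro i hi hall
    exact hSrev i i hi hi (fun k hk => by rw [hall k hk, hall (n-1-k) (by omega)])
  have hdA : ∀ i k, i ≤ ℓ - n → k < n → xor (v (i+k)) (v (i+k+1)) = s (i+k) := by
    intro i k hi hk
    rw [hvT _ (by omega), hvT _ (by omega)]
    exact (hts _ (by omega)).symm
  have hdB : ∀ i k, ℓ-n+2 ≤ i → i ≤ 2*ℓ-2*n+2 → k < n →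
      xor (v (i+k)) (v (i+k+1)) = s ((2*ℓ-2*n+2-i) + (n-1-k)) := by
    intro i k hi1 hi2 hk
    rw [hvU (i+k) (by omega) (by omega), hvU (i+k+1) (by omega) (by omega)]
    rw [show 2*ℓ-n+2-(i+k) = (2*ℓ-2*n+2-i) + (n-1-k) + 1 from by omega,
        show 2*ℓ-n+2-(i+k+1) = (2*ℓ-2*n+2-i) + (n-1-k) from by omega]
    rw [hts _ (by omega)]
    cases t ((2*ℓ-2*n+2-i) + (n-1-k)) <;> cases t ((2*ℓ-2*n+2-i) + (n-1-k) + 1) <;> rfl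
  have talt := mo_talt n ℓ hn hnl t s hts hS1
  have hdM : ∀ k, k < n → xor (v (ℓ-n+1+k)) (v (ℓ-n+1+k+1)) = true := by
    intro k hk
    rcases Nat.eq_zero_or_pos k with rfl | hkpos
    · rw [show ℓ-n+1+0 = ℓ-n+1 from by omega, show ℓ-n+1+0+1 = ℓ-n+2 from by omega]
      rw [hvT _ (by omega), hvU _ (by omega) (by omega)]
      rw [show 2*ℓ-n+2-(ℓ-n+2) = ℓ from by omega]
      have h1 := talt (n-1) (by omega)
      have e1' : (n-1) % 2 = 0 := by obtain ⟨c, hc⟩ := hodd; omega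
      rw [e1', show ℓ - (n-1) = ℓ-n+1 from by omega] at h1
      simp at h1
      rw [h1]
      cases t ℓ <;> rfl
    · rw [hvU (ℓ-n+1+k) (by omega) (by omega), hvU (ℓ-n+1+k+1) (by omega) (by omega)]
      rw [show 2*ℓ-n+2-(ℓ-n+1+k) = (ℓ-k) + 1 from by omega,
          show 2*ℓ-n+2-(ℓ-n+1+k+1) = ℓ-k from by omega]
      have := hS1 (ℓ-k) (by omega) (by omega)
      rw [hts _ (by omega)] at this
      revert this
      cases t (ℓ-k) <;> cases t (ℓ-k+1) <;> simp
  intro i j hi hj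
  constructor
  · intro H
    have Hd : ∀ k, k < n → xor (v (i+k)) (v (i+k+1)) = xor (v (j+k)) (v (j+k+1)) := by
      intro k hk
      have e1 := H k (by omega)
      have e2 := H (k+1) (by omega)
      rw [← Nat.add_assoc i k 1, ← Nat.add_assoc j k 1] at e2
      rw [e1, e2]
    rcases show i ≤ ℓ-n ∨ i = ℓ-n+1 ∨ (ℓ-n+2 ≤ i ∧ i ≤ 2*ℓ-2*n+2) from by omega with
      hiA | hiM | ⟨hiB, hiB2⟩ <;>
    rcases show j ≤ ℓ-n ∨ j = ℓ-n+1 ∨ (ℓ-n+2 ≤ j ∧ j ≤ 2*ℓ-2*n+2) from by omega with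
      hjA | hjM | ⟨hjB, hjB2⟩
    · exact hSinj i j hiA hjA (fun k hk => by
        rw [← hdA i k hiA hk, Hd k hk, hdA j k hjA hk])
    · subst hjM
      exact absurd (fun k hk => by rw [← hdA i k hiA hk, Hd k hk]; exact hdM k hk) (hSnp i hiA)
    · exact absurd (fun k hk => by rw [← hdA i k hiA hk, Hd k hk]; exact hdB j k hjB hjB2 hk)
        (hSrev i (2*ℓ-2*n+2-j) hiA (by omega))
    · subst hiM
      exact absurd (fun k hk => by rw [← hdA j k hjA hk, ← Hd k hk]; exact hdM k hk) (hSnp j hjA)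
    · omega
    · subst hiM
      exfalso
      apply hSnp (2*ℓ-2*n+2-j) (by omega)
      intro k hk
      have h1 := hdB j (n-1-k) hjB hjB2 (by omega)
      rw [show n-1-(n-1-k) = k from by omega] at h1
      rw [← h1, ← Hd (n-1-k) (by omega)]
      exact hdM (n-1-k) (by omega)
    · exact absurd (fun k hk => by rw [← hdA j k hjA hk, ← Hd k hk]; exact hdB i k hiB hiB2 hk)
        (hSrev j (2*ℓ-2*n+2-i) hjA (by omega))
    · subst hjM
      exfalso
      apply hSnp (2*ℓ-2*n+2-i) (by omega)
      intro k hk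
      have h1 := hdB i (n-1-k) hiB hiB2 (by omega)
      rw [show n-1-(n-1-k) = k from by omega] at h1
      rw [← h1, Hd (n-1-k) (by omega)]
      exact hdM (n-1-k) (by omega)
    · have : 2*ℓ-2*n+2-i = 2*ℓ-2*n+2-j := by
        apply hSinj _ _ (by omega) (by omega)
        intro k hk
        have h1 := hdB i (n-1-k) hiB hiB2 (by omega)
        have h2 := hdB j (n-1-k) hjB hjB2 (by omega)
        rw [show n-1-(n-1-k) = k from by omega] at h1 h2
        rw [← h1, Hd (n-1-k) (by omega), h2]
      omega
  · intro H
    have Hd : ∀ k, k < n → xor (v (i+k)) (v (i+k+1)) = xor (v (j+(n-1-k))) (v (j+(n-1-k)+1)) := by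
      intro k hk
      have e1 := H k (by omega)
      have e2 := H (k+1) (by omega)
      rw [← Nat.add_assoc i k 1] at e2
      rw [e1, e2, show j+(n-k) = j+(n-1-k)+1 from by omega,
          show j+(n-(k+1)) = j+(n-1-k) from by omega]
      cases v (j+(n-1-k)) <;> cases v (j+(n-1-k)+1) <;> rfl
    rcases show i ≤ ℓ-n ∨ i = ℓ-n+1 ∨ (ℓ-n+2 ≤ i ∧ i ≤ 2*ℓ-2*n+2) from by omega with
      hiA | hiM | ⟨hiB, hiB2⟩ <;>
    rcases show j ≤ ℓ-n ∨ j = ℓ-n+1 ∨ (ℓ-n+2 ≤ j ∧ j ≤ 2*ℓ-2*n+2) from by omega with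
      hjA | hjM | ⟨hjB, hjB2⟩
    · exact hSrev i j hiA hjA (fun k hk => by
        rw [← hdA i k hiA hk, Hd k hk, hdA j (n-1-k) hjA (by omega)])
    · subst hjM
      exact hSnp i hiA (fun k hk => by rw [← hdA i k hiA hk, Hd k hk]; exact hdM (n-1-k) (by omega))
    · have hij : i = 2*ℓ-2*n+2-j := by
        apply hSinj i _ hiA (by omega)
        intro k hk
        have h1 := hdB j (n-1-k) hjB hjB2 (by omega)
        rw [show n-1-(n-1-k) = k from by omega] at h1
        rw [← hdA i k hiA hk, Hd k hk, h1]
      have e0 := H 0 (by omega)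
      rw [Nat.add_zero, Nat.sub_zero] at e0
      rw [hvT i (by omega), hvU (j+n) (by omega) (by omega),
          show 2*ℓ-n+2-(j+n) = i from by omega] at e0
      simp at e0
    · subst hiM
      apply hSnp j hjA
      intro k hk
      have h := Hd (n-1-k) (by omega)
      rw [hdM (n-1-k) (by omega), show n-1-(n-1-k) = k from by omega] at h
      rw [← hdA j k hjA hk, ← h]
    · subst hiM; subst hjM
      have e0 := H 0 (by omega)
      rw [Nat.add_zero, Nat.sub_zero] at e0
      rw [hvT (ℓ-n+1) (by omega), hvU (ℓ-n+1+n) (by omega) (by omega),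
          show 2*ℓ-n+2-(ℓ-n+1+n) = ℓ-n+1 from by omega] at e0
      simp at e0
    · subst hiM
      apply hSnp (2*ℓ-2*n+2-j) (by omega)
      intro k hk
      have h1 := hdB j (n-1-k) hjB hjB2 (by omega)
      rw [show n-1-(n-1-k) = k from by omega] at h1
      rw [← h1, ← Hd k hk]
      exact hdM k hk
    · have hij : 2*ℓ-2*n+2-i = j := by
        apply hSinj _ j (by omega) hjA
        intro k hk
        have h1 := hdB i (n-1-k) hiB hiB2 (by omega)
        rw [show n-1-(n-1-k) = k from by omega] at h1
        rw [← h1, Hd (n-1-k) (by omega), show n-1-(n-1-k) = k from by omega]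
        exact hdA j k hjA hk
      have e0 := H 0 (by omega)
      rw [Nat.add_zero, Nat.sub_zero] at e0
      rw [hvU i (by omega) (by omega), hvT (j+n) (by omega),
          show 2*ℓ-n+2-i = j+n from by omega] at e0
      simp at e0
    · subst hjM
      apply hSnp (2*ℓ-2*n+2-i) (by omega)
      intro k hk
      have h1 := hdB i (n-1-k) hiB hiB2 (by omega)
      rw [show n-1-(n-1-k) = k from by omega] at h1
      rw [← h1, Hd (n-1-k) (by omega), show n-1-(n-1-k) = k from by omega]
      exact hdM k hk
    · apply hSrev (2*ℓ-2*n+2-j) (2*ℓ-2*n+2-i) (by omega) (by omega)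
      intro k hk
      have h1 := hdB j (n-1-k) hjB hjB2 (by omega)
      rw [show n-1-(n-1-k) = k from by omega] at h1
      have h2 := hdB i k hiB hiB2 hk
      rw [← h1, ← Hd k hk]
      exact h2

/-- Theorem 10, odd case: let `n` be odd, `S` an ideal `AOS(n)` of length `ℓ`,
`T` the element of `D⁻¹(S)` beginning with `0^n`, and `U = T̄^R`. Then `V`, the
sequence of length `2ℓ - n + 3` consisting of the `ℓ+1` bits of `T` followed by
the final `ℓ - n + 2` bits of `U` (i.e. `U` with its first `n - 1` bits
omitted), is an ideal `AOS(n+1)`. -/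
theorem merge_odd (n ℓ : ℕ) (S T : List Bool) (hno : Odd n) (hn : 1 < n)
    (hlen : S.length = ℓ) (hS : idealA S n) (hT : T ∈ DinvL S)
    (hT0 : ∀ i, i < n → T.getD i false = false) :
    (T ++ ((complL T).reverse).drop (n - 1)).length = 2 * ℓ - n + 3 ∧
      idealA (T ++ ((complL T).reverse).drop (n - 1)) (n + 1) := by
  obtain ⟨⟨hnS, hpair⟩, hid0, hid1⟩ := hS
  obtain ⟨hTlen0, hTD⟩ := hT
  have hnl : n ≤ ℓ := hlen ▸ hnS
  have hTlen : T.length = ℓ + 1 := by rw [hTlen0, hlen]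
  set V := T ++ ((complL T).reverse).drop (n-1) with hVdef
  have hcl : (complL T).length = ℓ + 1 := by simp [complL, hTlen]
  have hVlen : V.length = 2*ℓ - n + 3 := by
    rw [hVdef, List.length_append, List.length_drop, List.length_reverse, hcl, hTlen]
    omega
  have hts : ∀ k, k < ℓ → S.getD k false = xor (T.getD k false) (T.getD (k+1) false) := by
    intro k hk
    have hk' : k < (DmapL T).length := by
      simp [DmapL, List.length_zipWith, hTlen, List.length_tail]; omega
    rw [← hTD, List.getD_eq_getElem _ _ hk']
    simp only [DmapL] at hk' ⊢
    rw [List.getElem_zipWith, List.getElem_tail,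
        List.getD_eq_getElem _ _ (by omega), List.getD_eq_getElem _ _ (by omega)]
  have hS1 : ∀ k, ℓ - n + 1 ≤ k → k < ℓ → S.getD k false = true := by
    intro k h1 h2
    have := hid1 (ℓ-1-k) (by omega)
    rw [hlen, show ℓ - 1 - (ℓ-1-k) = k from by omega] at this
    exact this
  have hSinj : ∀ i j, i ≤ ℓ - n → j ≤ ℓ - n →
      (∀ k, k < n → S.getD (i+k) false = S.getD (j+k) false) → i = j := by
    intro i j hi hj hk
    exact (hpair i j (by omega) (by omega)).1
      ((mo_ltup_eq_iff S n i j (by omega) (by omega)).mpr hk)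
  have hSrev : ∀ i j, i ≤ ℓ - n → j ≤ ℓ - n →
      ¬ (∀ k, k < n → S.getD (i+k) false = S.getD (j+(n-1-k)) false) := by
    intro i j hi hj hk
    exact (hpair i j (by omega) (by omega)).2
      ((mo_ltup_rev_iff S n i j (by omega) (by omega)).mpr hk)
  have hvT : ∀ x, x ≤ ℓ → V.getD x false = T.getD x false := by
    intro x hx
    rw [hVdef, List.getD_append _ _ _ _ (by omega)]
  have talt := mo_talt n ℓ hn hnl (fun k => T.getD k false) (fun k => S.getD k false) hts hS1
  have hover : ∀ x, ℓ - n + 2 ≤ x → x ≤ ℓ →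
      T.getD x false = ! T.getD (2*ℓ - n + 2 - x) false := by
    intro x h1 h2
    have t1 := talt (ℓ - x) (by omega)
    have t2 := talt (n-2-(ℓ-x)) (by omega)
    rw [show ℓ - (ℓ - x) = x from by omega] at t1
    rw [show ℓ - (n-2-(ℓ-x)) = 2*ℓ-n+2-x from by omega] at t2
    rw [t1, t2]
    obtain ⟨c, hc⟩ := hno
    rcases Nat.mod_two_eq_zero_or_one (ℓ - x) with e | e
    · rw [e, show (n-2-(ℓ-x)) % 2 = 1 from by omega]
      cases T.getD ℓ false <;> rfl
    · rw [e, show (n-2-(ℓ-x)) % 2 = 0 from by omega]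
      cases T.getD ℓ false <;> rfl
  have hvU : ∀ x, ℓ - n + 2 ≤ x → x ≤ 2*ℓ - n + 2 →
      V.getD x false = ! T.getD (2*ℓ - n + 2 - x) false := by
    intro x h1 h2
    by_cases hx : x ≤ ℓ
    · rw [hvT x hx]; exact hover x h1 hx
    · rw [hVdef, List.getD_append_right _ _ _ _ (by omega)]
      rw [List.getD_eq_getElem _ _
        (by rw [List.length_drop]; simp only [List.length_reverse, hcl]; omega)]
      rw [List.getElem_drop, List.getElem_reverse]
      simp only [List.length_reverse, hcl]
      have : (complL T)[ℓ + 1 - 1 - (n - 1 + (x - T.length))]'(by simp [hcl])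
          = ! (T[ℓ + 1 - 1 - (n - 1 + (x - T.length))]'(by omega)) := by
        simp only [complL]
        rw [List.getElem_map]
      rw [this, List.getD_eq_getElem _ _ (by omega)]
      congr 2
      omega
  have key := mo_key n ℓ hn hno hnl (fun k => T.getD k false) (fun k => S.getD k false)
    (fun k => V.getD k false) hts hS1 hSinj hSrev hvT hvU
  refine ⟨hVlen, ⟨⟨by omega, ?_⟩, ?_, ?_⟩⟩
  · intro i j hi hj
    rw [hVlen] at hi hj
    have K := key i j (by omega) (by omega)
    constructor
    · intro h
      apply K.1
      have := (mo_ltup_eq_iff V (n+1) i j (by omega) (by omega)).mp h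
      exact fun k hk => this k (by omega)
    · intro h
      apply K.2
      intro k hk
      have := (mo_ltup_rev_iff V (n+1) i j (by omega) (by omega)).mp h k (by omega)
      rw [show n+1-1-k = n-k from by omega] at this
      exact this
  · intro i hi
    rw [hvT i (by omega)]
    exact hT0 i (by omega)
  · intro i hi
    rw [hVlen, show 2*ℓ-n+3-1-i = 2*ℓ-n+2-i from by omega,
        hvU (2*ℓ-n+2-i) (by omega) (by omega),
        show 2*ℓ-n+2-(2*ℓ-n+2-i) = i from by omega, hT0 i (by omega)]
    rfl
end

section
/- Suppose S_n is an ideal aperiodic orientable sequence of order n of length ℓ_n, and for each r ≥ n define S_{r+1} to be the ideal aperiodic orientable sequence of order r+1 obtained from S_r by the merging construction (taking T ∈ D^{-1}(S_r) beginning with 0^{r+1}, setting U = T̄^R, and appending to T the final bits of U with the first r bits of U omitted if r is even, or the first r−1 bits omitted if r is odd), with ℓ_r denoting the length of S_r. Then for every m ≥ 0, ℓ_{m+n} = 2^m(ℓ_n − n + 1) + x_m/3 + m + n − 1, where x_m = 2^m − 1 if n is even and m is even, x_m = 2^m − 2 if n is even and m is odd, x_m = 2^{m+1} − 2 if n is odd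 and m is even, and x_m = 2^{m+1} − 1 if n is odd and m is odd. -/
/-- One step of the merging construction at order `r`: take `T ∈ D⁻¹(S)`
beginning with `0^(r+1)`, set `U = T̄^R`, and append to `T` the final bits of
`U`, omitting the first `r` bits of `U` if `r` is even and the first `r - 1`
bits if `r` is odd. -/
def mergeStep (r : ℕ) (S S' : List Bool) : Prop :=
  ∃ T ∈ DinvL S, (∀ i, i < r + 1 → T.getD i false = false) ∧
    S' = T ++ ((complL T).reverse).drop (if Even r then r else r - 1)

/-- Lemma 12: if `S_n` is an ideal `AOS(n)` of length `ℓ_n` and, for `r ≥ n`,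
`S_{r+1}` is the ideal `AOS(r+1)` of length `ℓ_{r+1}` obtained from `S_r` by the
merging construction, then for every `m ≥ 0`,
`ℓ_{m+n} = 2^m (ℓ_n - n + 1) + x_m / 3 + m + n - 1`, where `x_m` is `2^m - 1`
(`n` even, `m` even), `2^m - 2` (`n` even, `m` odd), `2^(m+1) - 2` (`n` odd,
`m` even), or `2^(m+1) - 1` (`n` odd, `m` odd). -/
theorem aperiodic_lengths (n : ℕ) (Seq : ℕ → List Bool) (ell : ℕ → ℕ)
    (hn : 1 < n) (hstart : idealA (Seq n) n)
    (hlen : ∀ r, n ≤ r → (Seq r).length = ell r)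
    (hrec : ∀ r, n ≤ r →
      idealA (Seq (r + 1)) (r + 1) ∧ mergeStep r (Seq r) (Seq (r + 1))) :
    ∀ m : ℕ, ell (m + n) =
      2 ^ m * (ell n - n + 1) +
        (if Even n then (if Even m then 2 ^ m - 1 else 2 ^ m - 2)
         else (if Even m then 2 ^ (m + 1) - 2 else 2 ^ (m + 1) - 1)) / 3 +
        m + n - 1 := by
  have hln : (Seq n).length = ell n := hlen n le_rfl
  have hge : ∀ r, n ≤ r → r ≤ ell r := by
    intro r hr
    rcases eq_or_lt_of_le hr with h | h
    · subst h
      have := hstart.1.1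
      omega
    · obtain ⟨s, rfl⟩ : ∃ s, r = s + 1 := ⟨r - 1, by omega⟩
      have h2 := (hrec s (by omega)).1.1.1
      rw [hlen _ (by omega)] at h2
      exact h2
  have hrec2 : ∀ r, n ≤ r →
      ell (r + 1) + (if Even r then r else r - 1) = 2 * ell r + 2 := by
    intro r hr
    obtain ⟨_, T, ⟨hTlen, _⟩, _, hS'⟩ := hrec r hr
    set k := if Even r then r else r - 1 with hkdef
    have hkr : k ≤ r := by rw [hkdef]; split <;> omega
    have hgr := hge r hr
    have h1 : (Seq (r + 1)).length = ell (r + 1) := hlen _ (by omega)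
    have h2 : T.length = ell r + 1 := by rw [hTlen, hlen r hr]
    have h3 : (Seq (r + 1)).length = T.length + (T.length - k) := by
      rw [hS']
      simp [complL]
    omega
  have key : ∀ m : ℕ, ∃ c, ell (m + n) = 2 ^ m * (ell n - n + 1) + c + m + n - 1 ∧
      3 * c = (if Even n then (if Even m then 2 ^ m - 1 else 2 ^ m - 2)
        else (if Even m then 2 ^ (m + 1) - 2 else 2 ^ (m + 1) - 1)) := by
    intro m
    induction m with
    | zero =>
      refine ⟨0, ?_, ?_⟩
      · have := hge n le_rfl
        simp
        omega
      · rcases Nat.even_or_odd n with he | ho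
        · simp [he]
        · simp [Nat.not_even_iff_odd.2 ho]
    | succ m ih =>
      obtain ⟨c, h1, h2⟩ := ih
      have hr2 := hrec2 (m + n) (by omega)
      have hgn := hge n le_rfl
      have hp : 1 ≤ 2 ^ m := Nat.one_le_two_pow
      have hA : 2 ^ (m + 1) * (ell n - n + 1) = 2 * (2 ^ m * (ell n - n + 1)) := by ring
      have hps : (2 : ℕ) ^ (m + 1) = 2 * 2 ^ m := by ring
      have hpss : (2 : ℕ) ^ (m + 1 + 1) = 2 * 2 ^ (m + 1) := by ring
      have hmn : m + 1 + n = m + n + 1 := by omega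
      rcases Nat.even_or_odd n with hen | hon <;> rcases Nat.even_or_odd m with hem | hom
      · -- n even, m even
        have he : Even (m + n) := hem.add hen
        have hm1 : ¬ Even (m + 1) := by simp [Nat.even_add_one, hem]
        rw [if_pos he] at hr2
        rw [if_pos hen, if_pos hem] at h2
        refine ⟨2 * c, ?_, ?_⟩
        · rw [hmn, hA]; omega
        · rw [if_pos hen, if_neg hm1]; omega
      · -- n even, m odd
        have he : ¬ Even (m + n) := Nat.not_even_iff_odd.2 (hom.add_even hen)
        have hm1 : Even (m + 1) := hom.add_one
        rw [if_neg he] at hr2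
        rw [if_pos hen, if_neg (Nat.not_even_iff_odd.2 hom)] at h2
        have hp2 : 2 ≤ 2 ^ m := by
          calc (2:ℕ) = 2 ^ 1 := rfl
          _ ≤ 2 ^ m := Nat.pow_le_pow_right (by norm_num) hom.pos
        refine ⟨2 * c + 1, ?_, ?_⟩
        · rw [hmn, hA]; omega
        · rw [if_pos hen, if_pos hm1]; omega
      · -- n odd, m even
        have he : ¬ Even (m + n) := Nat.not_even_iff_odd.2 (hem.add_odd hon)
        have hm1 : ¬ Even (m + 1) := by simp [Nat.even_add_one, hem]
        rw [if_neg he] at hr2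
        rw [if_neg (Nat.not_even_iff_odd.2 hon), if_pos hem] at h2
        refine ⟨2 * c + 1, ?_, ?_⟩
        · rw [hmn, hA]; omega
        · rw [if_neg (Nat.not_even_iff_odd.2 hon), if_neg hm1]; omega
      · -- n odd, m odd
        have he : Even (m + n) := hom.add_odd hon
        have hm1 : Even (m + 1) := hom.add_one
        rw [if_pos he] at hr2
        rw [if_neg (Nat.not_even_iff_odd.2 hon),
          if_neg (Nat.not_even_iff_odd.2 hom)] at h2
        refine ⟨2 * c, ?_, ?_⟩
        · rw [hmn, hA]; omega
        · rw [if_neg (Nat.not_even_iff_odd.2 hon), if_pos hm1]; omega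
  intro m
  obtain ⟨c, h1, h2⟩ := key m
  have hp : 1 ≤ 2 ^ m := Nat.one_le_two_pow
  have hps : (2 : ℕ) ^ (m + 1) = 2 * 2 ^ m := by ring
  rw [h1]
  rcases Nat.even_or_odd n with hen | hon <;> rcases Nat.even_or_odd m with hem | hom
  · rw [if_pos hen, if_pos hem] at h2 ⊢; omega
  · rw [if_pos hen, if_neg (Nat.not_even_iff_odd.2 hom)] at h2 ⊢; omega
  · rw [if_neg (Nat.not_even_iff_odd.2 hon), if_pos hem] at h2 ⊢; omega
  · rw [if_neg (Nat.not_even_iff_odd.2 hon), if_neg (Nat.not_even_iff_odd.2 hom)] at h2 ⊢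
    omega
end

section
/- For every n with 1 ≤ n ≤ 4, there is no periodic orientable sequence of order n; that is, no n-window sequence S of any period m satisfies s_n(i) ≠ s_n(j)^R for all i, j. -/
/- ------- auxiliary material ------- -/

/-- Encode a 4-tuple as a natural number. -/
def enc (u : Fin 4 → Bool) : ℕ :=
  (if u 0 then 1 else 0) + 2 * (if u 1 then 1 else 0) +
    4 * (if u 2 then 1 else 0) + 8 * (if u 3 then 1 else 0)

lemma enc_inj : ∀ u v : Fin 4 → Bool, enc u = enc v → u = v := by decide

lemma enc_min_mem : ∀ u : Fin 4 → Bool, enc u ≠ enc (tupRev u) →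
    min (enc u) (enc (tupRev u)) ∈ ({1, 2, 3, 5, 7, 11} : Finset ℕ) := by decide

lemma tupRev_inj : ∀ u v : Fin 4 → Bool, tupRev u = tupRev v → u = v := by decide

lemma per_mul {s : ℕ → Bool} {m : ℕ} (h : hasPer s m) : ∀ q i, s (i + m * q) = s i := by
  intro q
  induction q with
  | zero => simp
  | succ q ih =>
    intro i
    have : i + m * (q + 1) = (i + m * q) + m := by ring
    rw [this, h, ih]

lemma per_mod {s : ℕ → Bool} {m : ℕ} (h : hasPer s m) (x : ℕ) : s x = s (x % m) := by
  conv_lhs => rw [← Nat.mod_add_div x m]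
  exact per_mul h _ _

/-- An orientable sequence of order `n` is orientable of order `n+1`. -/
lemma orientable_lift {s : ℕ → Bool} {n m : ℕ} (h : isOrientable s n m) :
    isOrientable s (n + 1) m := by
  obtain ⟨⟨hp, hw⟩, ho⟩ := h
  refine ⟨⟨hp, ?_⟩, ?_⟩
  · intro i j hij
    apply hw i j
    funext k
    have := congrFun hij (Fin.castSucc k)
    simpa [tup] using this
  · intro i j hij
    apply ho i (j + 1)
    funext k
    have hk : (k : ℕ) < n := k.isLt
    have := congrFun hij (Fin.castSucc k)
    simp only [tup, tupRev, Fin.val_rev, Fin.coe_castSucc] at this ⊢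
    rw [this]
    congr 1
    omega

/-- Read a finite vector cyclically. -/
def cyc (m : ℕ) (v : Fin m → Bool) (t : ℕ) : Bool :=
  if h : t % m < m then v ⟨t % m, h⟩ else false

lemma cyc_eq {m : ℕ} (hm : 0 < m) (v : Fin m → Bool) (t : ℕ) :
    cyc m v t = v ⟨t % m, Nat.mod_lt _ hm⟩ := by
  rw [cyc, dif_pos]

/-- The finite verification: every binary vector of length `1 ≤ m ≤ 6`,
read cyclically, contains a 4-window equal to the reverse of a 4-window. -/
lemma finite_check : ∀ m : ℕ, 1 ≤ m → m ≤ 6 → ∀ v : Fin m → Bool,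
    ∃ i j : Fin m, ∀ k : Fin 4,
      cyc m v ((i : ℕ) + (k : ℕ)) = cyc m v ((j : ℕ) + (3 - (k : ℕ))) := by
  intro m h1 h6
  interval_cases m <;> decide

/-- No orientable sequence of order 4 exists. -/
lemma no_orientable4 : ∀ (m : ℕ) (s : ℕ → Bool), ¬ isOrientable s 4 m := by
  rintro m s ⟨⟨⟨hm, hper, -⟩, hw⟩, ho⟩
  -- the 4-tuples at positions 0..m-1 are pairwise distinct
  have hfinj : ∀ i j : ℕ, i < m → j < m → tup s 4 i = tup s 4 j → i = j := by
    intro i j hi hj h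
    have := hw i j h
    unfold Nat.ModEq at this
    rwa [Nat.mod_eq_of_lt hi, Nat.mod_eq_of_lt hj] at this
  set g : ℕ → ℕ := fun i => min (enc (tup s 4 i)) (enc (tupRev (tup s 4 i))) with hg
  have hne : ∀ i, enc (tup s 4 i) ≠ enc (tupRev (tup s 4 i)) := by
    intro i h
    exact ho i i (enc_inj _ _ h)
  have hmem : ∀ i, g i ∈ ({1, 2, 3, 5, 7, 11} : Finset ℕ) := fun i => enc_min_mem _ (hne i)
  have hginj : Set.InjOn g (Finset.range m) := by
    intro i hi j hj hgij
    simp only [Finset.coe_range, Set.mem_Iio] at hi hj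
    simp only [hg] at hgij
    rcases min_cases (enc (tup s 4 i)) (enc (tupRev (tup s 4 i))) with ⟨h1, -⟩ | ⟨h1, -⟩ <;>
      rcases min_cases (enc (tup s 4 j)) (enc (tupRev (tup s 4 j))) with ⟨h2, -⟩ | ⟨h2, -⟩ <;>
      rw [h1, h2] at hgij
    · exact hfinj i j hi hj (enc_inj _ _ hgij)
    · exact absurd (enc_inj _ _ hgij) (ho i j)
    · exact absurd (enc_inj _ _ hgij).symm (ho j i)
    · exact hfinj i j hi hj (tupRev_inj _ _ (enc_inj _ _ hgij))
  have hm6 : m ≤ 6 := by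
    have := Finset.card_le_card_of_injOn g (fun i hi => hmem i) hginj
    simpa using this
  -- apply the finite check
  obtain ⟨i, j, H⟩ := finite_check m hm hm6 (fun t => s (t : ℕ))
  apply ho (i : ℕ) (j : ℕ)
  funext k
  have hk : (k : ℕ) < 4 := k.isLt
  have Hk := H k
  rw [cyc_eq hm, cyc_eq hm] at Hk
  simp only at Hk
  have e1 : tup s 4 (i : ℕ) k = s (((i : ℕ) + (k : ℕ)) % m) := by
    rw [tup, ← per_mod hper]
  have e2 : tupRev (tup s 4 (j : ℕ)) k = s (((j : ℕ) + (3 - (k : ℕ))) % m) := by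
    rw [tupRev, tup, ← per_mod hper]
    congr 2
    have : (k.rev : ℕ) = 3 - (k : ℕ) := by
      rw [Fin.val_rev]; omega
    rw [this]
  rw [e1, e2]
  exact Hk

/-- No periodic orientable sequence of order `n` exists for `1 ≤ n ≤ 4`: no
`n`-window sequence `S` of any period `m` satisfies `s_n(i) ≠ s_n(j)^R` for all
`i, j`. -/
theorem no_small_orientable :
    ∀ (n m : ℕ) (s : ℕ → Bool), 1 ≤ n → n ≤ 4 → ¬ isOrientable s n m := by
  intro n m s h1 h4 hO
  apply no_orientable4 m s
  interval_cases n
  · exact orientable_lift (orientable_lift (orientable_lift hO))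
  · exact orientable_lift (orientable_lift hO)
  · exact orientable_lift hO
  · exact hO
end
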